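/- arXiv:2502.21305 — 5 statements merged into one kernel-verified Lean document; each statement's English description precedes it below -/
import Mathlib

section
/- For every integer n ≥ 0, in the multivariate polynomial ring 𝔽₂[x_1,…,x_n,y,z] over the field 𝔽₂ = ℤ/2ℤ, the equality Φ_n(y+z; x_1,…,x_n) = Φ_n(y; x_1,…,x_n) + Φ_n(z; x_1,…,x_n) holds. -/
open MvPolynomial

/-- `Φ n x₀ x = ∏_{I ⊆ {1,…,n}} (x₀ + ∑_{i ∈ I} x i)`. -/
def Phi {R : Type*} [CommRing R] (n : ℕ) (x0 : R) (x : ℕ → R) : R :=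
  ∏ I ∈ (Finset.Icc 1 n).powerset, (x0 + ∑ i ∈ I, x i)

lemma Phi_zero {R : Type*} [CommRing R] (x0 : R) (x : ℕ → R) : Phi 0 x0 x = x0 := by
  simp [Phi]

lemma Phi_succ {R : Type*} [CommRing R] (n : ℕ) (x0 : R) (x : ℕ → R) :
    Phi (n + 1) x0 x = Phi n x0 x * Phi n (x0 + x (n + 1)) x := by
  have hn : (n + 1) ∉ Finset.Icc 1 n := by simp
  have hins : Finset.Icc 1 (n + 1) = insert (n + 1) (Finset.Icc 1 n) := by
    ext i
    simp [Finset.mem_insert]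
    omega
  rw [Phi, hins, Finset.prod_powerset_insert hn]
  congr 1
  apply Finset.prod_congr rfl
  intro I hI
  have : (n + 1) ∉ I := fun h => hn (Finset.mem_powerset.mp hI h)
  rw [Finset.sum_insert this]
  ring

lemma Phi_add {R : Type*} [CommRing R] (h2 : (2 : R) = 0) (n : ℕ) (x : ℕ → R) :
    ∀ a b : R, Phi n (a + b) x = Phi n a x + Phi n b x := by
  induction n with
  | zero => intro a b; simp [Phi_zero]
  | succ n ih =>
    intro a b
    rw [Phi_succ, Phi_succ, Phi_succ]
    have h1 : Phi n (a + b) x = Phi n a x + Phi n b x := ih a b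
    have h2' : Phi n (a + b + x (n + 1)) x = Phi n a x + Phi n (b + x (n + 1)) x := by
      rw [add_assoc]; exact ih a (b + x (n + 1))
    have h3 : Phi n (a + x (n + 1)) x = Phi n a x + Phi n (x (n + 1)) x := ih _ _
    have h4 : Phi n (b + x (n + 1)) x = Phi n b x + Phi n (x (n + 1)) x := ih _ _
    rw [h1, h2', h3, h4]
    have : (2 : R) * (Phi n a x * Phi n b x) = 0 := by rw [h2]; ring
    linear_combination this

/-- In `𝔽₂[x₁,…,xₙ,y,z]` (variables indexed by `ℕ ⊕ Bool`, where `Sum.inl i` is `xᵢ`,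
`Sum.inr false` is `y`, `Sum.inr true` is `z`) one has
`Φ_n(y+z; x₁,…,xₙ) = Φ_n(y; x₁,…,xₙ) + Φ_n(z; x₁,…,xₙ)`. -/
theorem stmt2 (n : ℕ) :
    Phi n ((X (Sum.inr false) : MvPolynomial (ℕ ⊕ Bool) (ZMod 2)) + X (Sum.inr true))
        (fun i => X (Sum.inl i))
      = Phi n (X (Sum.inr false) : MvPolynomial (ℕ ⊕ Bool) (ZMod 2)) (fun i => X (Sum.inl i))
        + Phi n (X (Sum.inr true) : MvPolynomial (ℕ ⊕ Bool) (ZMod 2)) (fun i => X (Sum.inl i)) := by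
  have h2 : (2 : MvPolynomial (ℕ ⊕ Bool) (ZMod 2)) = 0 := by
    have := CharP.cast_eq_zero (MvPolynomial (ℕ ⊕ Bool) (ZMod 2)) 2
    exact_mod_cast this
  exact Phi_add h2 n _ _ _
end

section
/- For every integer n ≥ 2, in ℤ[x_1,…,x_n] one has pol_{2^{n−1}}(p_n) ≡ (pol_{2^{n−2}}(p_{n−1}))² + pol_{2^{n−1}}(q_{n−1}) (mod 2), where p_{n−1} ∈ ℤ[x_1,…,x_{n−1}] and q_{n−1} ∈ ℤ[x_1,…,x_n] are regarded as polynomials in x_1,…,x_n. -/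
open MvPolynomial

/-- `p_n = Φ_n(1; x₁,…,xₙ) ∈ ℤ[x₁,…,xₙ]`. -/
noncomputable def pPol (n : ℕ) : MvPolynomial ℕ ℤ :=
  Phi n 1 fun i => X i

/-- `q_n = Φ_n(1 + x_{n+1}; x₁,…,xₙ) ∈ ℤ[x₁,…,x_{n+1}]`. -/
noncomputable def qPol (n : ℕ) : MvPolynomial ℕ ℤ :=
  Phi n (1 + X (n + 1)) fun i => X i

/-- Reduction of the integer coefficients mod `2`. -/
noncomputable def toF2 : MvPolynomial ℕ ℤ →+* MvPolynomial ℕ (ZMod 2) :=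
  MvPolynomial.map (Int.castRingHom (ZMod 2))

namespace Aux6

abbrev S2 := MvPolynomial ℕ (ZMod 2)

/-- The sum of the variables indexed by `I`, mod `2`. -/
noncomputable def sX (I : Finset ℕ) : S2 := ∑ i ∈ I, X i

lemma coeff_sX (k : ℕ) (I : Finset ℕ) :
    coeff (Finsupp.single k 1) (sX I) = if k ∈ I then 1 else 0 := by
  classical
  unfold sX
  rw [MvPolynomial.coeff_sum]
  have : ∀ i ∈ I, coeff (Finsupp.single k 1) (X i : S2)
      = if i = k then (1 : ZMod 2) else 0 := by
    intro i _
    rw [MvPolynomial.coeff_X']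
    congr 1
    rw [Finsupp.single_left_inj (one_ne_zero)]
  rw [Finset.sum_congr rfl this, Finset.sum_ite_eq' I k]

lemma sX_injective : Function.Injective sX := by
  intro I J h
  ext k
  have h2 := congrArg (coeff (Finsupp.single k 1)) h
  rw [coeff_sX, coeff_sX] at h2
  by_cases hI : k ∈ I <;> by_cases hJ : k ∈ J <;>
    simp_all

lemma sX_add (I J : Finset ℕ) : sX I + sX J = sX (symmDiff I J) := by
  classical
  unfold sX
  rw [← Finset.sum_union_inter (s₁ := I) (s₂ := J)]
  have h1 : I ∪ J = symmDiff I J ∪ I ∩ J := (symmDiff_sup_inf I J).symm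
  have h2 : Disjoint (symmDiff I J) (I ∩ J) := disjoint_symmDiff_inf I J
  rw [h1, Finset.sum_union h2, add_assoc, CharTwo.add_self_eq_zero, add_zero]

lemma card_powerset_Icc (m : ℕ) : ((Finset.Icc 1 m).powerset).card = 2 ^ m := by
  rw [Finset.card_powerset, Nat.card_Icc]; simp

set_option maxHeartbeats 1000000 in
open Polynomial in
/-- `𝔽₂`-linearity of the "subspace polynomial" `x₀ ↦ ∏_{I} (x₀ + ∑_{i ∈ I} x i)`. -/
lemma Phi_linear (m : ℕ) (a b : S2) :
    ∏ I ∈ (Finset.Icc 1 m).powerset, (a + b + sX I)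
      = ∏ I ∈ (Finset.Icc 1 m).powerset, (a + sX I)
        + ∏ I ∈ (Finset.Icc 1 m).powerset, (b + sX I) := by
  classical
  set P := (Finset.Icc 1 m).powerset with hP
  set A : Polynomial S2 := ∏ I ∈ P, (Polynomial.X + Polynomial.C (b + sX I)) with hA
  set B : Polynomial S2 := ∏ I ∈ P, (Polynomial.X + Polynomial.C (sX I)) with hB
  set F : Polynomial S2 := A - B - Polynomial.C (∏ I ∈ P, (b + sX I)) with hF
  have hmem : ∀ I J : Finset ℕ, I ∈ P → J ∈ P → symmDiff I J ∈ P := by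
    intro I J hI hJ
    rw [hP, Finset.mem_powerset] at *
    exact le_trans symmDiff_le_sup (sup_le hI hJ)
  have hevalgen : ∀ c : S2, F.eval c = (∏ I ∈ P, (c + b + sX I))
      - (∏ I ∈ P, (c + sX I)) - ∏ I ∈ P, (b + sX I) := by
    intro c
    rw [hF, Polynomial.eval_sub, Polynomial.eval_sub, Polynomial.eval_C, hA, hB,
      Polynomial.eval_prod, Polynomial.eval_prod]
    congr 1
    congr 1
    · exact Finset.prod_congr rfl fun I _ => by
        rw [Polynomial.eval_add, Polynomial.eval_X, Polynomial.eval_C]; ring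
    · exact Finset.prod_congr rfl fun I _ => by
        rw [Polynomial.eval_add, Polynomial.eval_X, Polynomial.eval_C]
  -- each `sX J`, `J ∈ P`, is a root of `F`
  have hroot : ∀ J ∈ P, F.eval (sX J) = 0 := by
    intro J hJ
    rw [hevalgen]
    have h1 : ∏ I ∈ P, (sX J + b + sX I) = ∏ I ∈ P, (b + sX I) := by
      refine Finset.prod_bij' (fun I _ => symmDiff J I) (fun I _ => symmDiff J I)
        (fun I hI => hmem J I hJ hI) (fun I hI => hmem J I hJ hI)
        (fun I hI => symmDiff_symmDiff_cancel_left J I)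
        (fun I hI => symmDiff_symmDiff_cancel_left J I)
        (fun I hI => ?_)
      rw [← sX_add]
      ring
    have h2 : ∏ I ∈ P, (sX J + sX I) = 0 := by
      refine Finset.prod_eq_zero hJ ?_
      exact CharTwo.add_self_eq_zero _
    rw [h1, h2, sub_zero, sub_self]
  -- degree bound
  have hAmonic : A.Monic := Polynomial.monic_prod_of_monic _ _ fun I _ => monic_X_add_C _
  have hBmonic : B.Monic := Polynomial.monic_prod_of_monic _ _ fun I _ => monic_X_add_C _
  have hAdeg : A.natDegree = 2 ^ m := by
    rw [hA, Polynomial.natDegree_prod_of_monic _ _ fun I _ => monic_X_add_C _,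
      Finset.sum_congr rfl (fun I (_ : I ∈ P) => natDegree_X_add_C (b + sX I)),
      Finset.sum_const, smul_eq_mul, mul_one, hP, card_powerset_Icc]
  have hBdeg : B.natDegree = 2 ^ m := by
    rw [hB, Polynomial.natDegree_prod_of_monic _ _ fun I _ => monic_X_add_C _,
      Finset.sum_congr rfl (fun I (_ : I ∈ P) => natDegree_X_add_C (sX I)),
      Finset.sum_const, smul_eq_mul, mul_one, hP, card_powerset_Icc]
  have hAd : A.degree = (2 ^ m : ℕ) := by
    rw [Polynomial.degree_eq_natDegree hAmonic.ne_zero, hAdeg]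
  have hBd : B.degree = (2 ^ m : ℕ) := by
    rw [Polynomial.degree_eq_natDegree hBmonic.ne_zero, hBdeg]
  have hdegF : F.degree < (2 ^ m : ℕ) := by
    have hsub : (A - B).degree < (2 ^ m : ℕ) := by
      rcases eq_or_ne A B with h | h
      · rw [h, sub_self, Polynomial.degree_zero]
        exact WithBot.bot_lt_coe _
      · have := Polynomial.degree_sub_lt (hAd.trans hBd.symm) hAmonic.ne_zero
          (hAmonic.leadingCoeff.trans hBmonic.leadingCoeff.symm)
        rwa [hAd] at this
    have hc : (Polynomial.C (∏ I ∈ P, (b + sX I))).degree < (2 ^ m : ℕ) := by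
      refine lt_of_le_of_lt (Polynomial.degree_C_le) ?_
      exact_mod_cast WithBot.coe_lt_coe.mpr (pow_pos (by norm_num) m)
    rw [hF]
    exact lt_of_le_of_lt (Polynomial.degree_sub_le _ _) (max_lt hsub hc)
  have hF0 : F = 0 := by
    rcases eq_or_ne F 0 with h | h
    · exact h
    refine Polynomial.eq_zero_of_natDegree_lt_card_of_eval_eq_zero' F (P.image sX) ?_ ?_
    · intro y hy
      obtain ⟨J, hJ, rfl⟩ := Finset.mem_image.mp hy
      exact hroot J hJ
    · rw [Finset.card_image_of_injective _ sX_injective, hP, card_powerset_Icc]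
      exact (Polynomial.natDegree_lt_iff_degree_lt h).mpr hdegF
  have hz := hevalgen a
  rw [hF0, Polynomial.eval_zero] at hz
  have h4 : ∏ I ∈ P, (a + b + sX I)
      - (∏ I ∈ P, (a + sX I) + ∏ I ∈ P, (b + sX I)) = 0 := by
    rw [← sub_sub]; exact hz.symm
  exact sub_eq_zero.mp h4

lemma hc_toF2 (k : ℕ) (f : MvPolynomial ℕ ℤ) :
    toF2 (homogeneousComponent k f) = homogeneousComponent k (toF2 f) := by
  show MvPolynomial.map _ _ = _
  ext d
  rw [coeff_map, coeff_homogeneousComponent, coeff_homogeneousComponent,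
    apply_ite (Int.castRingHom (ZMod 2)), map_zero]
  show _ = if d.degree = k then coeff d (MvPolynomial.map _ f) else 0
  rw [coeff_map]

lemma hc_sq (k : ℕ) (f : S2) :
    homogeneousComponent (2 * k) (f ^ 2) = (homogeneousComponent k f) ^ 2 := by
  conv_lhs => rw [← sum_homogeneousComponent f, sum_pow_char 2, map_sum]
  have h1 : ∀ i ∈ Finset.range (f.totalDegree + 1),
      homogeneousComponent (2 * k) ((homogeneousComponent i f) ^ 2)
        = if i = k then (homogeneousComponent i f) ^ 2 else 0 := by
    intro i _
    have hh : ((homogeneousComponent i f) ^ 2).IsHomogeneous (i * 2) :=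
      (homogeneousComponent_isHomogeneous i f).pow 2
    rw [homogeneousComponent_of_mem ((mem_homogeneousSubmodule _ _).mpr hh)]
    congr 1
    simp only [eq_iff_iff]
    omega
  rw [Finset.sum_congr rfl h1, Finset.sum_ite_eq' _ k]
  split_ifs with h
  · rfl
  · rw [homogeneousComponent_eq_zero k f (by simp at h; omega)]
    rw [pow_two, mul_zero]

lemma hc_mul_homog (d : ℕ) (f g : S2) (hg : g.IsHomogeneous d) :
    homogeneousComponent d (f * g) = C (coeff 0 f) * g := by
  conv_lhs => rw [← sum_homogeneousComponent f, Finset.sum_mul, map_sum]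
  have h1 : ∀ i ∈ Finset.range (f.totalDegree + 1),
      homogeneousComponent d ((homogeneousComponent i f) * g)
        = if i = 0 then (homogeneousComponent i f) * g else 0 := by
    intro i _
    have hh : ((homogeneousComponent i f) * g).IsHomogeneous (i + d) :=
      (homogeneousComponent_isHomogeneous i f).mul hg
    rw [homogeneousComponent_of_mem ((mem_homogeneousSubmodule _ _).mpr hh)]
    congr 1
    simp only [eq_iff_iff]
    omega
  rw [Finset.sum_congr rfl h1, Finset.sum_ite_eq' _ 0]
  rw [if_pos (Finset.mem_range.mpr (Nat.succ_pos _)), homogeneousComponent_zero]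

lemma pPol_succ (m : ℕ) : pPol (m + 1) = pPol m * qPol m := by
  unfold pPol qPol Phi
  have hIcc : Finset.Icc 1 (m+1) = insert (m+1) (Finset.Icc 1 m) := by
    ext x; simp [Finset.mem_Icc]; omega
  have hnot : (m+1) ∉ Finset.Icc 1 m := by simp
  have hdisj : Disjoint ((Finset.Icc 1 m).powerset)
      (((Finset.Icc 1 m).powerset).image (insert (m+1))) := by
    rw [Finset.disjoint_left]
    intro I hI hI'
    obtain ⟨J, _, rfl⟩ := Finset.mem_image.mp hI'
    rw [Finset.mem_powerset] at hI
    exact hnot (hI (Finset.mem_insert_self _ _))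
  have hinj : Set.InjOn (insert (m+1)) ((Finset.Icc 1 m).powerset : Set (Finset ℕ)) := by
    intro I hI J hJ h
    simp only [Finset.coe_powerset, Set.mem_preimage, Set.mem_powerset_iff,
      Finset.coe_subset] at hI hJ
    have hmI : (m+1) ∉ I := fun hc => hnot (hI hc)
    have hmJ : (m+1) ∉ J := fun hc => hnot (hJ hc)
    rw [← Finset.erase_insert hmI, ← Finset.erase_insert hmJ, h]
  rw [hIcc, Finset.powerset_insert, Finset.prod_union hdisj, Finset.prod_image hinj]
  congr 1
  refine Finset.prod_congr rfl fun I hI => ?_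
  rw [Finset.mem_powerset] at hI
  rw [Finset.sum_insert (fun h => hnot (hI h))]
  ring

lemma toF2_pPol (m : ℕ) :
    toF2 (pPol m) = ∏ I ∈ (Finset.Icc 1 m).powerset, (1 + sX I) := by
  unfold pPol Phi sX toF2
  rw [map_prod]
  refine Finset.prod_congr rfl fun I _ => ?_
  rw [map_add, map_one, map_sum]
  simp [MvPolynomial.map_X]

lemma toF2_qPol (m : ℕ) :
    toF2 (qPol m) = ∏ I ∈ (Finset.Icc 1 m).powerset, (1 + X (m+1) + sX I) := by
  unfold qPol Phi sX toF2
  rw [map_prod]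
  refine Finset.prod_congr rfl fun I _ => ?_
  rw [map_add, map_add, map_one, map_sum]
  simp [MvPolynomial.map_X]

lemma totalDegree_pbar (m : ℕ) :
    (∏ I ∈ (Finset.Icc 1 m).powerset, ((1 : S2) + sX I)).totalDegree < 2 ^ m := by
  have hmem : (∅ : Finset ℕ) ∈ (Finset.Icc 1 m).powerset := Finset.empty_mem_powerset _
  rw [← Finset.mul_prod_erase _ _ hmem, show (1 : S2) + sX ∅ = 1 by simp [sX], one_mul]
  refine lt_of_le_of_lt (MvPolynomial.totalDegree_finset_prod _ _) ?_
  have hdeg1 : ∀ I : Finset ℕ, ((1 : S2) + sX I).totalDegree ≤ 1 := by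
    intro I
    refine le_trans (MvPolynomial.totalDegree_add _ _) (max_le (by simp) ?_)
    refine le_trans (MvPolynomial.totalDegree_finset_sum _ _) (Finset.sup_le fun i _ => ?_)
    rw [MvPolynomial.totalDegree_X]
  calc ∑ I ∈ ((Finset.Icc 1 m).powerset).erase ∅, ((1 : S2) + sX I).totalDegree
      ≤ ∑ I ∈ ((Finset.Icc 1 m).powerset).erase ∅, 1 :=
        Finset.sum_le_sum fun I _ => hdeg1 I
    _ = (((Finset.Icc 1 m).powerset).erase ∅).card := by
        rw [Finset.sum_const, smul_eq_mul, mul_one]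
    _ < 2 ^ m := by
        rw [Finset.card_erase_of_mem hmem, card_powerset_Icc]
        have : 0 < 2 ^ m := pow_pos (by norm_num) m
        omega

lemma homog_R (m : ℕ) :
    (∏ I ∈ (Finset.Icc 1 m).powerset, (X (m+1) + sX I) : S2).IsHomogeneous (2 ^ m) := by
  have h := MvPolynomial.IsHomogeneous.prod ((Finset.Icc 1 m).powerset)
    (fun I => X (m+1) + sX I) (fun _ => 1)
    (fun I _ => (MvPolynomial.isHomogeneous_X _ _).add
      (MvPolynomial.IsHomogeneous.sum _ _ _ fun i _ => MvPolynomial.isHomogeneous_X _ _))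
  simpa [card_powerset_Icc] using h

lemma constcoeff_pbar (m : ℕ) :
    coeff 0 (∏ I ∈ (Finset.Icc 1 m).powerset, ((1 : S2) + sX I)) = 1 := by
  show constantCoeff _ = 1
  rw [map_prod]
  refine Finset.prod_eq_one fun I _ => ?_
  rw [map_add, map_one]
  simp [sX, map_sum]

end Aux6

open Aux6 in
/-- For every `n ≥ 2`, in `ℤ[x₁,…,xₙ]` one has
`pol_{2^{n−1}}(p_n) ≡ (pol_{2^{n−2}}(p_{n−1}))² + pol_{2^{n−1}}(q_{n−1}) (mod 2)`. -/
theorem stmt6 (n : ℕ) (hn : 2 ≤ n) :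
    toF2 (homogeneousComponent (2 ^ (n - 1)) (pPol n))
      = toF2 ((homogeneousComponent (2 ^ (n - 2)) (pPol (n - 1))) ^ 2
          + homogeneousComponent (2 ^ (n - 1)) (qPol (n - 1))) := by
  obtain ⟨k, rfl⟩ : ∃ k, n = k + 2 := ⟨n - 2, by omega⟩
  have h1 : k + 2 - 1 = k + 1 := rfl
  have h2 : k + 2 - 2 = k := rfl
  rw [h1, h2, map_add, map_pow, hc_toF2, hc_toF2, hc_toF2]
  have hsplit : toF2 (pPol (k + 2)) = toF2 (pPol (k + 1)) * toF2 (qPol (k + 1)) := by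
    rw [← map_mul, ← pPol_succ]
  set P := (Finset.Icc 1 (k + 1)).powerset with hPdef
  set R : S2 := ∏ I ∈ P, (X (k + 1 + 1) + sX I) with hR
  have hq : toF2 (qPol (k + 1)) = toF2 (pPol (k + 1)) + R := by
    rw [toF2_qPol, toF2_pPol, hR]
    exact Phi_linear (k + 1) 1 (X (k + 1 + 1))
  rw [hsplit, hq, mul_add, ← pow_two, map_add]
  have hRhom : R.IsHomogeneous (2 ^ (k + 1)) := homog_R (k + 1)
  have e1 : homogeneousComponent (2 ^ (k + 1)) (toF2 (pPol (k + 1)) ^ 2)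
      = (homogeneousComponent (2 ^ k) (toF2 (pPol (k + 1)))) ^ 2 := by
    rw [show 2 ^ (k + 1) = 2 * 2 ^ k from by ring, hc_sq]
  have e2 : homogeneousComponent (2 ^ (k + 1)) (toF2 (pPol (k + 1)) * R)
      = C (coeff 0 (toF2 (pPol (k + 1)))) * R := hc_mul_homog _ _ _ hRhom
  have hconst : coeff 0 (toF2 (pPol (k + 1))) = 1 := by
    rw [toF2_pPol]; exact constcoeff_pbar (k + 1)
  have e3 : homogeneousComponent (2 ^ (k + 1)) (toF2 (pPol (k + 1))) = 0 := by
    refine homogeneousComponent_eq_zero _ _ ?_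
    rw [toF2_pPol]
    exact totalDegree_pbar (k + 1)
  have e4 : homogeneousComponent (2 ^ (k + 1)) R = R := by
    rw [homogeneousComponent_of_mem ((mem_homogeneousSubmodule _ _).mpr hRhom), if_pos rfl]
  rw [e1, e2, hconst, map_one, one_mul, map_add, e3, e4, zero_add]
end

section
/- For every integer n ≥ 1, consider the images of the homogeneous components of p_n under the canonical ring map 𝔽₂[x_1,…,x_n] → R_n (precomposed with reduction of ℤ-coefficients mod 2). Then: the image of pol_0(p_n) is 1; the image of pol_i(p_n) is 0 for every i with 0 < i < 2^{n−1}; and the image of pol_{2^{n−1}}(p_n) equals Σ_{i=1}^{n} ε^{2^{n−1} − i} · e_i(x_1,…,x_n), where e_i denotes the i-th elementary symmetric polynomial in x_1,…,x_n. -/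
open MvPolynomial

/-- The ideal `I_m ⊆ 𝔽₂[x₁,…,x_m,ε]` generated by `x_j² − ε·x_j` for `j = 1,…,m`.
The variables are indexed by `Fin (m+1)`: index `0` is `ε` and index `j ≠ 0` is `x_j`. -/
noncomputable def relIdeal (m : ℕ) : Ideal (MvPolynomial (Fin (m + 1)) (ZMod 2)) :=
  Ideal.span {f : MvPolynomial (Fin (m + 1)) (ZMod 2) |
    ∃ j : Fin (m + 1), j ≠ 0 ∧ f = X j ^ 2 - X 0 * X j}

/-- The ring `R_m = 𝔽₂[x₁,…,x_m,ε]/I_m`. -/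
abbrev Rring (m : ℕ) := MvPolynomial (Fin (m + 1)) (ZMod 2) ⧸ relIdeal m

/-- The image of the variable `x_j` (for `1 ≤ j ≤ m`) in `R_m`. -/
noncomputable def xv (m : ℕ) (j : ℕ) : Rring m :=
  Ideal.Quotient.mk (relIdeal m) (X (Fin.ofNat (m + 1) j))

/-- The image of the variable `ε` in `R_m`. -/
noncomputable def eps (m : ℕ) : Rring m :=
  Ideal.Quotient.mk (relIdeal m) (X 0)

/-- The canonical ring map `ℤ[x₁,…,xₙ] → R_n`: reduce the coefficients mod `2`
and send the variable `xᵢ` to (the class of) `xᵢ`. -/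
noncomputable def toR (n : ℕ) : MvPolynomial ℕ ℤ →+* Rring n :=
  eval₂Hom (Int.castRingHom (Rring n)) fun i => xv n i

/-!
Let `R` have characteristic 2 and `x_i² = ε x_i` for `i ∈ s`. Put `q = 2^(|s|-1)` and
`B_s = ∑_{T ⊆ s} ε^(q-|T|) x^T`; squaring termwise gives `B_s² = ε^q B_s`. By induction
on `s`, `∏_{I ⊆ s} (t + ∑_{i ∈ I} x_i) = P_s(t) := t^(2q) + (B_s + ε^q) t^q`: the
polynomial `P_s` is additive (Frobenius), so the product over `insert a s` is
`P_s(t) (P_s(t) + P_s(x_a))`, where `P_s(x_a) = ε^(q-1) x_a B_s`. At `t = 1` this shows that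
`p_n` maps to `1 + ∑_i ε^(q-i) e_i` in `R_n`, a sum of pieces of degrees `0` and `q`; as `I_n`
is a homogeneous ideal, the homogeneous components of `p_n` map to the homogeneous components
of that sum.
-/

open scoped Finset

theorem pow_succ_eq_pow_mul_of_sq_eq_mul {M : Type*} [CommMonoid M] {ε x : M}
    (hx : x ^ 2 = ε * x) (k : ℕ) : x ^ (k + 1) = ε ^ k * x := by
  induction k with
  | zero => simp
  | succ k ih => rw [pow_succ, ih, mul_assoc, ← sq, hx, pow_succ, mul_assoc]

theorem prod_sq_eq_pow_card_mul {M ι : Type*} [CommMonoid M] {ε : M} {x : ι → M}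
    {s : Finset ι} (hx : ∀ i ∈ s, x i ^ 2 = ε * x i) :
    (∏ j ∈ s, x j) ^ 2 = ε ^ #s * ∏ j ∈ s, x j := by
  rw [← Finset.prod_pow, Finset.prod_congr rfl hx, Finset.prod_mul_distrib, Finset.prod_const]

theorem Nat.le_two_pow_pred (n : ℕ) : n ≤ 2 ^ (n - 1) := by
  have := Nat.lt_two_pow_self (n := n - 1)
  omega

section CharTwo

variable {R ι : Type*} [CommRing R] {ε : R} {x : ι → R} {s : Finset ι}

def weightedSubsetProdSum (ε : R) (x : ι → R) (s : Finset ι) : R :=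
  ∑ T ∈ s.powerset, ε ^ (2 ^ (#s - 1) - #T) * ∏ j ∈ T, x j

theorem weightedSubsetProdSum_insert [DecidableEq ι] {a : ι} (ha : a ∉ s) (hs : s.Nonempty) :
    weightedSubsetProdSum ε x (insert a s)
      = (ε ^ 2 ^ (#s - 1) + ε ^ (2 ^ (#s - 1) - 1) * x a) * weightedSubsetProdSum ε x s := by
  have hcard : #(insert a s) - 1 = #s - 1 + 1 := by
    rw [Finset.card_insert_of_notMem ha]; have := hs.card_pos; omega
  rw [weightedSubsetProdSum, weightedSubsetProdSum, Finset.sum_powerset_insert ha, hcard,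
    add_mul, Finset.mul_sum, Finset.mul_sum]
  congr 1 <;> refine Finset.sum_congr rfl fun T hT => ?_
  · have hT_le : #T ≤ 2 ^ (#s - 1) :=
      (Finset.card_le_card (Finset.mem_powerset.mp hT)).trans (Nat.le_two_pow_pred _)
    rw [← mul_assoc, ← pow_add]
    congr 2
    rw [pow_succ]
    omega
  · have haT : a ∉ T := fun h => ha (Finset.mem_powerset.mp hT h)
    have hT_le : #T ≤ 2 ^ (#s - 1) :=
      (Finset.card_le_card (Finset.mem_powerset.mp hT)).trans (Nat.le_two_pow_pred _)
    have hq : 1 ≤ 2 ^ (#s - 1) := Nat.one_le_two_pow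
    rw [Finset.card_insert_of_notMem haT, Finset.prod_insert haT,
      show 2 ^ (#s - 1 + 1) - (#T + 1) = (2 ^ (#s - 1) - 1) + (2 ^ (#s - 1) - #T) by
        rw [pow_succ]; omega, pow_add]
    ring

theorem weightedSubsetProdSum_eq_add_sum :
    weightedSubsetProdSum ε x s = ε ^ 2 ^ (#s - 1) + ∑ i ∈ Finset.Icc 1 #s,
      ε ^ (2 ^ (#s - 1) - i) * ∑ S ∈ s.powersetCard i, ∏ j ∈ S, x j := by
  rw [weightedSubsetProdSum, Finset.sum_powerset, Finset.range_eq_Ico,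
    Finset.sum_eq_sum_Ico_succ_bot (Nat.succ_pos _)]
  simp only [Finset.powersetCard_zero, Finset.sum_singleton, Finset.card_empty,
    Finset.prod_empty, mul_one, Nat.sub_zero, zero_add, Nat.succ_eq_add_one,
    Finset.Ico_add_one_right_eq_Icc]
  congr 1
  refine Finset.sum_congr rfl fun i _ => ?_
  rw [Finset.mul_sum]
  refine Finset.sum_congr rfl fun S hS => ?_
  rw [(Finset.mem_powersetCard.mp hS).2]

variable [CharP R 2]

theorem weightedSubsetProdSum_sq (hx : ∀ i ∈ s, x i ^ 2 = ε * x i) :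
    weightedSubsetProdSum ε x s ^ 2 = ε ^ 2 ^ (#s - 1) * weightedSubsetProdSum ε x s := by
  rw [weightedSubsetProdSum, CharTwo.sum_sq, Finset.mul_sum]
  refine Finset.sum_congr rfl fun T hT => ?_
  have hTs := Finset.mem_powerset.mp hT
  have hT_le : #T ≤ 2 ^ (#s - 1) := (Finset.card_le_card hTs).trans (Nat.le_two_pow_pred _)
  rw [mul_pow, prod_sq_eq_pow_card_mul fun i hi => hx i (hTs hi), ← mul_assoc, ← mul_assoc,
    ← pow_mul, ← pow_add, ← pow_add]
  congr 2
  omega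

theorem prod_powerset_add_sum_of_nonempty (hs : s.Nonempty) (hx : ∀ i ∈ s, x i ^ 2 = ε * x i)
    (t : R) : ∏ I ∈ s.powerset, (t + ∑ i ∈ I, x i)
      = t ^ 2 ^ #s + (weightedSubsetProdSum ε x s + ε ^ 2 ^ (#s - 1)) * t ^ 2 ^ (#s - 1) := by
  classical
  induction hs using Finset.Nonempty.cons_induction generalizing t with
  | singleton a =>
    rw [weightedSubsetProdSum, ← insert_empty_eq,
      Finset.prod_powerset_insert (Finset.notMem_empty a),
      Finset.sum_powerset_insert (Finset.notMem_empty a)]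
    simp only [Finset.powerset_empty, Finset.prod_singleton, Finset.sum_singleton,
      Finset.sum_empty, insert_empty_eq, Finset.card_empty, Finset.prod_empty]
    norm_num
    linear_combination (-(ε * t)) * CharTwo.two_eq_zero (R := R)
  | cons a s ha hs ih =>
    rw [Finset.cons_eq_insert] at hx ⊢
    have hxs : ∀ i ∈ s, x i ^ 2 = ε * x i := fun i hi => hx i (Finset.mem_insert_of_mem hi)
    have hy : x a ^ 2 = ε * x a := hx a (Finset.mem_insert_self a s)
    have hB := weightedSubsetProdSum_sq hxs
    have hshift : ∏ T ∈ s.powerset, (t + ∑ i ∈ insert a T, x i)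
        = ∏ T ∈ s.powerset, ((t + x a) + ∑ i ∈ T, x i) := by
      refine Finset.prod_congr rfl fun T hT => ?_
      rw [Finset.sum_insert fun h => ha (Finset.mem_powerset.mp hT h), add_assoc]
    have hq1 : 1 ≤ 2 ^ (#s - 1) := Nat.one_le_two_pow
    have h2q : 2 ^ #s = 2 ^ (#s - 1) * 2 := by
      rw [← pow_succ]; have := hs.card_pos; congr 1; omega
    have hyq : x a ^ 2 ^ (#s - 1) = ε ^ (2 ^ (#s - 1) - 1) * x a := by
      rw [← pow_succ_eq_pow_mul_of_sq_eq_mul hy, Nat.sub_add_cancel hq1]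
    have hεq : ε ^ 2 ^ (#s - 1) = ε ^ (2 ^ (#s - 1) - 1) * ε := by
      rw [← pow_succ, Nat.sub_add_cancel hq1]
    rw [Finset.prod_powerset_insert ha, hshift, ih hxs t, ih hxs (t + x a),
      weightedSubsetProdSum_insert ha hs, Finset.card_insert_of_notMem ha, Nat.add_sub_cancel,
      pow_succ, add_pow_char_pow, add_pow_char_pow, h2q]
    simp only [pow_mul]
    rw [hyq]
    rw [hεq] at hB ⊢
    generalize t ^ 2 ^ (#s - 1) = u, ε ^ (2 ^ (#s - 1) - 1) = d,
      weightedSubsetProdSum ε x s = B, x a = y at *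
    have h2 : (2 : R) = 0 := CharTwo.two_eq_zero
    have hadd : u ^ 2 + (d * y) ^ 2 + (B + d * ε) * (u + d * y)
        = (u ^ 2 + (B + d * ε) * u) + d * y * B := by
      linear_combination d ^ 2 * hy + d ^ 2 * ε * y * h2
    have hBε : (B + d * ε) * B = 0 := by linear_combination hB + d * ε * B * h2
    rw [hadd]
    linear_combination
      u ^ 2 * hB + d * y * u * hBε + (u ^ 3 * (B + d * ε) + B * d * ε * u ^ 2) * h2

theorem prod_powerset_one_add_sum (hx : ∀ i ∈ s, x i ^ 2 = ε * x i) :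
    ∏ I ∈ s.powerset, (1 + ∑ i ∈ I, x i) = 1 + ∑ i ∈ Finset.Icc 1 #s,
      ε ^ (2 ^ (#s - 1) - i) * ∑ S ∈ s.powersetCard i, ∏ j ∈ S, x j := by
  rcases s.eq_empty_or_nonempty with rfl | hs
  · simp
  · rw [prod_powerset_add_sum_of_nonempty hs hx, weightedSubsetProdSum_eq_add_sum]
    simp only [one_pow, mul_one]
    linear_combination ε ^ 2 ^ (#s - 1) * CharTwo.two_eq_zero (R := R)

end CharTwo

theorem MvPolynomial.map_homogeneousComponent {σ R S : Type*} [CommSemiring R]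
    [CommSemiring S] (f : R →+* S) (n : ℕ) (p : MvPolynomial σ R) :
    map f (homogeneousComponent n p) = homogeneousComponent n (map f p) := by
  ext d
  simp only [coeff_map, coeff_homogeneousComponent]
  split_ifs <;> simp

section GradedQuotient

attribute [local instance] MvPolynomial.gradedAlgebra

theorem MvPolynomial.mk_homogeneousComponent_eq_of_mk_eq {σ R : Type*} [CommRing R]
    {I : Ideal (MvPolynomial σ R)} (hI : I.IsHomogeneous (homogeneousSubmodule σ R))
    {f g : MvPolynomial σ R} (h : Ideal.Quotient.mk I f = Ideal.Quotient.mk I g) (i : ℕ) :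
    Ideal.Quotient.mk I (homogeneousComponent i f)
      = Ideal.Quotient.mk I (homogeneousComponent i g) := by
  rw [Ideal.Quotient.eq, ← map_sub]
  exact homogeneousComponent_mem_of_mem hI (Ideal.Quotient.eq.mp h) i

theorem relIdeal_isHomogeneous (m : ℕ) :
    (relIdeal m).IsHomogeneous (homogeneousSubmodule (Fin (m + 1)) (ZMod 2)) := by
  refine Ideal.homogeneous_span _ _ ?_
  rintro _ ⟨j, -, rfl⟩
  refine ⟨2, (mem_homogeneousSubmodule _ _).mpr ?_⟩
  exact ((isHomogeneous_X _ j).pow 2).sub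
    (by simpa using (isHomogeneous_X _ 0).mul (isHomogeneous_X _ j))

end GradedQuotient

theorem relIdeal_le_ker_constantCoeff (m : ℕ) : relIdeal m ≤ RingHom.ker constantCoeff := by
  refine Ideal.span_le.mpr ?_
  rintro _ ⟨j, -, rfl⟩
  simp

instance (m : ℕ) : Nontrivial (Rring m) :=
  Ideal.Quotient.nontrivial_iff.mpr fun h => by
    simpa using relIdeal_le_ker_constantCoeff m
      (h ▸ Submodule.mem_top : (1 : MvPolynomial _ _) ∈ relIdeal m)

instance (m : ℕ) : CharP (Rring m) 2 :=
  charP_of_injective_algebraMap (algebraMap (ZMod 2) (Rring m)).injective 2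

theorem xv_sq {m j : ℕ} (h1 : 1 ≤ j) (h2 : j ≤ m) : xv m j ^ 2 = eps m * xv m j := by
  rw [xv, eps, ← map_pow, ← map_mul, Ideal.Quotient.eq]
  refine Ideal.subset_span ⟨Fin.ofNat (m + 1) j, fun h0 => ?_, rfl⟩
  have := congrArg Fin.val h0
  rw [Fin.val_ofNat, Nat.mod_eq_of_lt (by omega), Fin.val_zero] at this
  omega

theorem toR_pPol (n : ℕ) :
    toR n (pPol n) = 1 + ∑ i ∈ Finset.Icc 1 n, eps n ^ (2 ^ (n - 1) - i)
      * ∑ S ∈ (Finset.Icc 1 n).powersetCard i, ∏ j ∈ S, xv n j := by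
  have hx : ∀ j ∈ Finset.Icc 1 n, xv n j ^ 2 = eps n * xv n j := fun j hj =>
    xv_sq (Finset.mem_Icc.mp hj).1 (Finset.mem_Icc.mp hj).2
  simpa [pPol, Phi, toR] using prod_powerset_one_add_sum hx

noncomputable def toPolyMod2 (n : ℕ) :
    MvPolynomial ℕ ℤ →+* MvPolynomial (Fin (n + 1)) (ZMod 2) :=
  (rename (Fin.ofNat (n + 1))).toRingHom.comp (map (Int.castRingHom (ZMod 2)))

theorem toR_eq_mk_comp_toPolyMod2 (n : ℕ) :
    toR n = (Ideal.Quotient.mk (relIdeal n)).comp (toPolyMod2 n) :=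
  ringHom_ext (fun a => by simp [toR, toPolyMod2]) (fun i => by simp [toR, toPolyMod2, xv])

theorem toPolyMod2_homogeneousComponent (n i : ℕ) (p : MvPolynomial ℕ ℤ) :
    toPolyMod2 n (homogeneousComponent i p) = homogeneousComponent i (toPolyMod2 n p) := by
  simp [toPolyMod2, map_homogeneousComponent, rename_homogeneousComponent]

noncomputable def homogenizedEsymmSum (n : ℕ) : MvPolynomial (Fin (n + 1)) (ZMod 2) :=
  ∑ i ∈ Finset.Icc 1 n, X 0 ^ (2 ^ (n - 1) - i)
    * ∑ S ∈ (Finset.Icc 1 n).powersetCard i, ∏ j ∈ S, X (Fin.ofNat (n + 1) j)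

theorem homogenizedEsymmSum_isHomogeneous (n : ℕ) :
    (homogenizedEsymmSum n).IsHomogeneous (2 ^ (n - 1)) := by
  refine IsHomogeneous.sum _ _ _ fun i hi => ?_
  have hi_le : i ≤ 2 ^ (n - 1) := (Finset.mem_Icc.mp hi).2.trans (Nat.le_two_pow_pred n)
  have hesymm : (∑ S ∈ (Finset.Icc 1 n).powersetCard i,
      ∏ j ∈ S, (X (Fin.ofNat (n + 1) j) : MvPolynomial _ (ZMod 2))).IsHomogeneous i := by
    refine IsHomogeneous.sum _ _ _ fun S hS => ?_
    simpa [(Finset.mem_powersetCard.mp hS).2] using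
      IsHomogeneous.prod S _ (fun _ => 1) fun j _ => isHomogeneous_X _ (Fin.ofNat (n + 1) j)
  simpa [Nat.sub_add_cancel hi_le] using
    ((isHomogeneous_X (ZMod 2) 0).pow (2 ^ (n - 1) - i)).mul hesymm

theorem mk_homogenizedEsymmSum (n : ℕ) :
    Ideal.Quotient.mk (relIdeal n) (homogenizedEsymmSum n)
      = ∑ i ∈ Finset.Icc 1 n, eps n ^ (2 ^ (n - 1) - i)
          * ∑ S ∈ (Finset.Icc 1 n).powersetCard i, ∏ j ∈ S, xv n j := by
  simp [homogenizedEsymmSum, eps, xv]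

theorem toR_homogeneousComponent_pPol (n i : ℕ) :
    toR n (homogeneousComponent i (pPol n))
      = Ideal.Quotient.mk (relIdeal n) (homogeneousComponent i (1 + homogenizedEsymmSum n)) := by
  rw [toR_eq_mk_comp_toPolyMod2, RingHom.comp_apply, toPolyMod2_homogeneousComponent]
  refine mk_homogeneousComponent_eq_of_mk_eq (relIdeal_isHomogeneous n) ?_ i
  rw [← RingHom.comp_apply, ← toR_eq_mk_comp_toPolyMod2, toR_pPol, map_add, map_one,
    mk_homogenizedEsymmSum]

theorem stmt13_general (n : ℕ) :
    toR n (homogeneousComponent 0 (pPol n)) = 1 ∧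
    (∀ i : ℕ, 0 < i → i < 2 ^ (n - 1) → toR n (homogeneousComponent i (pPol n)) = 0) ∧
    toR n (homogeneousComponent (2 ^ (n - 1)) (pPol n))
      = ∑ i ∈ Finset.Icc 1 n, eps n ^ (2 ^ (n - 1) - i)
          * ∑ S ∈ (Finset.Icc 1 n).powersetCard i, ∏ j ∈ S, xv n j := by
  have hq : 2 ^ (n - 1) ≠ 0 := by positivity
  have hcomp (i : ℕ) : toR n (homogeneousComponent i (pPol n))
      = (if i = 0 then 1 else 0)
        + if i = 2 ^ (n - 1) then Ideal.Quotient.mk (relIdeal n) (homogenizedEsymmSum n)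
          else 0 := by
    rw [toR_homogeneousComponent_pPol, map_add,
      homogeneousComponent_of_mem ((mem_homogeneousSubmodule 0 _).mpr (isHomogeneous_one _ _)),
      homogeneousComponent_of_mem
        ((mem_homogeneousSubmodule _ _).mpr (homogenizedEsymmSum_isHomogeneous n))]
    split_ifs <;> simp_all [eq_comm]
  refine ⟨?_, fun i hi0 hiq => ?_, ?_⟩
  · rw [hcomp, if_pos rfl, if_neg hq.symm, add_zero]
  · rw [hcomp, if_neg hi0.ne', if_neg hiq.ne, add_zero]
  · rw [hcomp, if_neg hq, if_pos rfl, zero_add, mk_homogenizedEsymmSum]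

/-- For every `n ≥ 1`: the image in `R_n` of `pol₀(p_n)` is `1`; the image of
`pol_i(p_n)` is `0` for `0 < i < 2^{n−1}`; and the image of `pol_{2^{n−1}}(p_n)` is
`Σ_{i=1}^{n} ε^{2^{n−1}−i} · e_i(x₁,…,xₙ)`, where `e_i` is the `i`-th elementary
symmetric polynomial in `x₁,…,xₙ`. -/
theorem stmt13 (n : ℕ) (hn : 1 ≤ n) :
    toR n (homogeneousComponent 0 (pPol n)) = 1 ∧
    (∀ i : ℕ, 0 < i → i < 2 ^ (n - 1) → toR n (homogeneousComponent i (pPol n)) = 0) ∧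
    toR n (homogeneousComponent (2 ^ (n - 1)) (pPol n))
      = ∑ i ∈ Finset.Icc 1 n, eps n ^ (2 ^ (n - 1) - i)
          * ∑ S ∈ (Finset.Icc 1 n).powersetCard i, ∏ j ∈ S, xv n j :=
  stmt13_general n
end

section
/- Let F be a field of characteristic different from 2, let n ≥ 0, and let a_1,…,a_n be nonzero elements of F. Let E := F[y_1,…,y_n]/(y_1² − a_1, …, y_n² − a_n), an F-algebra, and for each subset S ⊆ {1,…,n} let m_S ∈ E denote the image of the monomial ∏_{i∈S} y_i. Then the family (m_S)_{S ⊆ {1,…,n}} is an F-basis of E, and the trace form of E over F is diagonal in this basis: for all subsets S, T ⊆ {1,…,n}, the trace Tr_{E/F}(m_S · m_T) equals 2^n · ∏_{i∈S} a_i if S = T, and equals 0 if S ≠ T. -/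
/-!
Reducing exponents modulo 2 with `yᵢ² = aᵢ` shows that the `m_S` span `E`, and the map sending
`y^d` to `(∏ aᵢ^⌊dᵢ/2⌋) · e_{odd part of d}` kills the ideal, hence descends to `E` and sends
`m_S` to the standard basis vector `e_S`, so the `m_S` are independent. Since
`m_S m_T = (∏_{S ∩ T} aᵢ) m_{S ∆ T}`, multiplication by `m_U` with `U ≠ ∅` moves every basis vector
to a multiple of a different one and has trace `0`, while `m_S² = ∏_S aᵢ` is a scalar.
-/

open MvPolynomial

/-- The ideal `(y₁² − a₁, …, yₙ² − aₙ) ⊆ F[y₁,…,yₙ]`. -/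
noncomputable def sqrtIdeal (F : Type*) [Field F] (n : ℕ) (a : Fin n → F) :
    Ideal (MvPolynomial (Fin n) F) :=
  Ideal.span {f : MvPolynomial (Fin n) F | ∃ i : Fin n, f = X i ^ 2 - C (a i)}

/-- The `F`-algebra `E = F[y₁,…,yₙ]/(y₁² − a₁, …, yₙ² − aₙ)`. -/
abbrev MultiQuadExt (F : Type*) [Field F] (n : ℕ) (a : Fin n → F) :=
  MvPolynomial (Fin n) F ⧸ sqrtIdeal F n a

/-- For a subset `S ⊆ {1,…,n}`, the image `m_S ∈ E` of the monomial `∏_{i∈S} yᵢ`. -/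
noncomputable def monS (F : Type*) [Field F] (n : ℕ) (a : Fin n → F)
    (S : Finset (Fin n)) : MultiQuadExt F n a :=
  Ideal.Quotient.mk (sqrtIdeal F n a) (∏ i ∈ S, X i)

section Reduction

variable {F : Type*} [Field F] {σ : Type*} [Fintype σ] (a : σ → F)

def oddSupport (d : σ →₀ ℕ) : Finset σ := Finset.univ.filter fun i => Odd (d i)

lemma oddSupport_add_single_two (d : σ →₀ ℕ) (i : σ) :
    oddSupport (d + Finsupp.single i 2) = oddSupport d := by
  classical
  ext j
  by_cases h : i = j <;> simp [oddSupport, Finsupp.single_apply, h, Nat.odd_add]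

lemma prod_pow_half_add_single_two (d : σ →₀ ℕ) (i : σ) :
    ∏ j, a j ^ ((d + Finsupp.single i 2 : σ →₀ ℕ) j / 2) = a i * ∏ j, a j ^ (d j / 2) := by
  classical
  have half : ∀ j, (d + Finsupp.single i 2 : σ →₀ ℕ) j / 2 = d j / 2 + if i = j then 1 else 0 := by
    intro j
    by_cases h : i = j <;> simp [h]
  simp only [half, pow_add, Finset.prod_mul_distrib, pow_ite, pow_one, pow_zero,
    Finset.prod_ite_eq, Finset.mem_univ, if_true]
  ring

/-- Reduction modulo the relations `Xᵢ² = aᵢ`, with `single S c` standing for `c · ∏_{i ∈ S} Xᵢ`. -/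
noncomputable def reduceSq : MvPolynomial σ F →ₗ[F] (Finset σ →₀ F) :=
  (basisMonomials σ F).constr F fun d => Finsupp.single (oddSupport d) (∏ i, a i ^ (d i / 2))

lemma reduceSq_monomial (d : σ →₀ ℕ) (c : F) :
    reduceSq a (monomial d c) = Finsupp.single (oddSupport d) (c * ∏ i, a i ^ (d i / 2)) := by
  have : monomial d c = c • basisMonomials σ F d := by
    rw [coe_basisMonomials, smul_monomial, smul_eq_mul, mul_one]
  rw [this, map_smul, reduceSq, Module.Basis.constr_basis, Finsupp.smul_single, smul_eq_mul]

lemma reduceSq_mul_X_sq (p : MvPolynomial σ F) (i : σ) :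
    reduceSq a (p * X i ^ 2) = a i • reduceSq a p := by
  induction p using MvPolynomial.induction_on' with
  | monomial d c =>
    rw [X_pow_eq_monomial, monomial_mul, mul_one, reduceSq_monomial, reduceSq_monomial,
      oddSupport_add_single_two, prod_pow_half_add_single_two, Finsupp.smul_single, smul_eq_mul,
      mul_left_comm]
  | add p q hp hq => rw [add_mul, map_add, hp, hq, map_add, smul_add]

lemma reduceSq_mul_X_sq_sub (p : MvPolynomial σ F) (i : σ) :
    reduceSq a (p * (X i ^ 2 - C (a i))) = 0 := by
  rw [mul_sub, map_sub, reduceSq_mul_X_sq, mul_comm p, ← smul_eq_C_mul, map_smul, sub_self]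

lemma reduceSq_prod_X (S : Finset σ) : reduceSq a (∏ i ∈ S, X i) = Finsupp.single S 1 := by
  classical
  have indicator : ∀ j, (∑ i ∈ S, Finsupp.single i 1 : σ →₀ ℕ) j = if j ∈ S then 1 else 0 := by
    intro j
    simp [Finsupp.finsetSum_apply, Finsupp.single_apply]
  have hS : oddSupport (∑ i ∈ S, Finsupp.single i 1 : σ →₀ ℕ) = S := by
    ext j
    by_cases h : j ∈ S <;> simp [oddSupport, indicator, h]
  simp only [X, ← monomial_sum_one, reduceSq_monomial, hS, indicator]
  simp [apply_ite (· / 2)]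

end Reduction

lemma Algebra.trace_eq_zero_of_mul_basis_eq_smul {F E ι : Type*} [Field F] [CommRing E]
    [Algebra F E] [Fintype ι] [DecidableEq ι] (b : Module.Basis ι F E) {x : E} (σ : ι → ι)
    (c : ι → F) (hx : ∀ i, x * b i = c i • b (σ i)) (hσ : ∀ i, σ i ≠ i) :
    Algebra.trace F E x = 0 := by
  rw [Algebra.trace_eq_matrix_trace b, Matrix.trace]
  refine Finset.sum_eq_zero fun i _ => ?_
  rw [Matrix.diag_apply, Algebra.leftMulMatrix_eq_repr_mul, hx, map_smul, b.repr_self,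
    Finsupp.smul_apply, Finsupp.single_eq_of_ne (hσ i).symm, smul_zero]

section MultiQuadExt

variable {F : Type*} [Field F] {n : ℕ} (a : Fin n → F)

lemma sqrtIdeal_eq_span_range :
    sqrtIdeal F n a = Ideal.span (Set.range fun i => X i ^ 2 - C (a i)) := by
  simp only [sqrtIdeal, Set.range, eq_comm]

lemma reduceSq_eq_zero_of_mem {p : MvPolynomial (Fin n) F} (hp : p ∈ sqrtIdeal F n a) :
    reduceSq a p = 0 := by
  rw [sqrtIdeal_eq_span_range, Ideal.mem_span_range_iff_exists_fun] at hp
  obtain ⟨c, rfl⟩ := hp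
  simp only [map_sum, reduceSq_mul_X_sq_sub, Finset.sum_const_zero]

lemma linearIndependent_monS : LinearIndependent F (monS F n a) := by
  classical
  let I := sqrtIdeal F n a
  let reduceQuot : MultiQuadExt F n a →ₗ[F] (Finset (Fin n) →₀ F) :=
    (I.restrictScalars F).liftQ (reduceSq a) (fun _ hp => reduceSq_eq_zero_of_mem a hp) ∘ₗ
      (Submodule.Quotient.restrictScalarsEquiv F I).symm.toLinearMap
  refine LinearIndependent.of_comp reduceQuot ?_
  convert (Finsupp.basisSingleOne : Module.Basis _ F (Finset (Fin n) →₀ F)).linearIndependent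
  ext S : 1
  exact reduceSq_prod_X a S

lemma mk_X_sq (i : Fin n) :
    Ideal.Quotient.mk (sqrtIdeal F n a) (X i) ^ 2 = algebraMap F (MultiQuadExt F n a) (a i) := by
  rw [← map_pow, ← Ideal.Quotient.mk_algebraMap, algebraMap_eq, Ideal.Quotient.eq]
  exact Ideal.subset_span ⟨i, rfl⟩

lemma monS_empty : monS F n a ∅ = 1 := by
  rw [monS, Finset.prod_empty, map_one]

lemma monS_singleton (i : Fin n) : monS F n a {i} = Ideal.Quotient.mk (sqrtIdeal F n a) (X i) := by
  rw [monS, Finset.prod_singleton]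

lemma monS_mul (S T : Finset (Fin n)) :
    monS F n a S * monS F n a T = (∏ i ∈ S ∩ T, a i) • monS F n a (symmDiff S T) := by
  classical
  have hpoly : (∏ i ∈ S, X i : MvPolynomial (Fin n) F) * ∏ i ∈ T, X i
      = (∏ i ∈ symmDiff S T, X i) * ∏ i ∈ S ∩ T, X i ^ 2 := by
    simp only [sq, Finset.prod_mul_distrib]
    rw [← mul_assoc,
      ← Finset.prod_union (s₁ := symmDiff S T) (s₂ := S ∩ T) (disjoint_symmDiff_inf S T),
      show symmDiff S T ∪ S ∩ T = S ∪ T from symmDiff_sup_inf S T, Finset.prod_union_inter]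
  have hsq : ∀ i ∈ S ∩ T, Ideal.Quotient.mk (sqrtIdeal F n a) (X i ^ 2)
      = algebraMap F (MultiQuadExt F n a) (a i) := fun i _ => by rw [map_pow, mk_X_sq]
  rw [monS, monS, ← map_mul, hpoly, map_mul, map_prod (Ideal.Quotient.mk _) _ (S ∩ T),
    Finset.prod_congr rfl hsq, ← map_prod, mul_comm, ← Algebra.smul_def, monS]

lemma span_monS_eq_top : Submodule.span F (Set.range (monS F n a)) = ⊤ := by
  set V := Submodule.span F (Set.range (monS F n a))
  have mul_monS_mem : ∀ x ∈ V, ∀ T, x * monS F n a T ∈ V := by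
    intro x hx T
    induction hx using Submodule.span_induction with
    | mem _ hy =>
      obtain ⟨S, rfl⟩ := hy
      rw [monS_mul]
      exact V.smul_mem _ (Submodule.subset_span ⟨_, rfl⟩)
    | zero => simp
    | add y z _ _ hy hz => simpa only [add_mul] using V.add_mem hy hz
    | smul c y _ hy => simpa only [smul_mul_assoc] using V.smul_mem c hy
  refine Submodule.eq_top_iff'.mpr fun x => ?_
  obtain ⟨p, rfl⟩ := Ideal.Quotient.mk_surjective x
  induction p using MvPolynomial.induction_on with
  | C c =>
    rw [← algebraMap_eq, Ideal.Quotient.mk_algebraMap, Algebra.algebraMap_eq_smul_one,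
      ← monS_empty a]
    exact V.smul_mem c (Submodule.subset_span ⟨_, rfl⟩)
  | add p q hp hq => simpa only [map_add] using V.add_mem hp hq
  | mul_X p i hp => simpa only [map_mul, monS_singleton] using mul_monS_mem _ hp {i}

noncomputable def basisMonS : Module.Basis (Finset (Fin n)) F (MultiQuadExt F n a) :=
  Module.Basis.mk (linearIndependent_monS a) (span_monS_eq_top a).ge

lemma basisMonS_apply (S : Finset (Fin n)) : basisMonS a S = monS F n a S :=
  Module.Basis.mk_apply _ _ S

lemma trace_monS_of_ne_empty {U : Finset (Fin n)} (hU : U ≠ ∅) :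
    Algebra.trace F (MultiQuadExt F n a) (monS F n a U) = 0 := by
  classical
  refine Algebra.trace_eq_zero_of_mul_basis_eq_smul (basisMonS a) (symmDiff U)
    (fun W => ∏ i ∈ U ∩ W, a i) (fun W => ?_) (fun W h => hU (symmDiff_eq_right.mp h))
  simp only [basisMonS_apply, monS_mul]

end MultiQuadExt

theorem stmt14_general (F : Type*) [Field F] (n : ℕ) (a : Fin n → F) :
    (∃ b : Module.Basis (Finset (Fin n)) F (MultiQuadExt F n a),
        ∀ S : Finset (Fin n), b S = monS F n a S) ∧
    ∀ S T : Finset (Fin n),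
      Algebra.trace F (MultiQuadExt F n a) (monS F n a S * monS F n a T)
        = if S = T then (2 : F) ^ n * ∏ i ∈ S, a i else 0 := by
  refine ⟨⟨basisMonS a, basisMonS_apply a⟩, fun S T => ?_⟩
  rw [monS_mul, map_smul]
  split_ifs with hST
  · subst hST
    rw [symmDiff_self, Finset.bot_eq_empty, monS_empty, ← map_one (algebraMap F _),
      Algebra.trace_algebraMap_of_basis (basisMonS a), Fintype.card_finset, Fintype.card_fin,
      Finset.inter_self, nsmul_eq_mul, smul_eq_mul]
    push_cast
    ring
  · rw [trace_monS_of_ne_empty a (fun h => hST (symmDiff_eq_bot.mp h)), smul_zero]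

/-- Let `F` be a field of characteristic `≠ 2`, `n ≥ 0`, and `a₁,…,aₙ` nonzero elements
of `F`. Let `E = F[y₁,…,yₙ]/(y₁² − a₁, …, yₙ² − aₙ)` and `m_S` the image of `∏_{i∈S} yᵢ`.
Then the family `(m_S)_{S ⊆ {1,…,n}}` is an `F`-basis of `E`, and the trace form of
`E/F` is diagonal in this basis: `Tr_{E/F}(m_S · m_T) = 2^n · ∏_{i∈S} aᵢ` if `S = T`,
and `= 0` otherwise. -/
theorem stmt14 (F : Type*) [Field F] (hF : ringChar F ≠ 2) (n : ℕ)
    (a : Fin n → F) (ha : ∀ i, a i ≠ 0) :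
    (∃ b : Module.Basis (Finset (Fin n)) F (MultiQuadExt F n a),
        ∀ S : Finset (Fin n), b S = monS F n a S) ∧
    ∀ S T : Finset (Fin n),
      Algebra.trace F (MultiQuadExt F n a) (monS F n a S * monS F n a T)
        = if S = T then (2 : F) ^ n * ∏ i ∈ S, a i else 0 :=
  stmt14_general F n a
end

section
/- For every subset A ⊆ {1,…,g}, the number of G-orbits of odd classes [T] ∈ Θ with A(T) = A equals 2^{g−1−|A|} if |A| < g, and equals 0 if A = {1,…,g}. (These orbit counts are the multiplicities n_A^− with which the field E_A occurs in the étale algebra S_C^− of odd theta characteristics of the test curve.) -/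
/-- `Ω = {1,…,2g+2}`. -/
def Omega (g : ℕ) : Finset ℕ := Finset.Icc 1 (2 * g + 2)

/-- Admissible subsets of `Ω`: subsets `T ⊆ Ω` with `|T| ≡ g+1 (mod 2)`. -/
def Adm (g : ℕ) := {T : Finset ℕ // T ⊆ Omega g ∧ T.card % 2 = (g + 1) % 2}

/-- The permutation of `ℕ` attached to `v ∈ (ℤ/2ℤ)^g`: for each `j = 1,…,g` (indexed by
`Fin g` via `j−1`) with `v` nonzero at `j`, it swaps `2j−1` and `2j`, and it fixes
everything else. -/
def tau (g : ℕ) (v : Fin g → ZMod 2) (k : ℕ) : ℕ :=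
  if h : 1 ≤ k ∧ k ≤ 2 * g then
    if v ⟨(k - 1) / 2, by omega⟩ = 1 then (if k % 2 = 1 then k + 1 else k - 1) else k
  else k

/-- The action of `v ∈ (ℤ/2ℤ)^g` on subsets of `Ω`. -/
def act (g : ℕ) (v : Fin g → ZMod 2) (T : Finset ℕ) : Finset ℕ :=
  T.image (tau g v)

/-- `A(T) ⊆ {1,…,g}` (indexed by `Fin g`, with `j : Fin g` standing for `j+1`):
the set of `j` such that exactly one of `2j−1`, `2j` (i.e. of `2·j.val+1`, `2·j.val+2`)
belongs to `T`. -/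
def ATset (g : ℕ) (T : Finset ℕ) : Finset (Fin g) :=
  Finset.univ.filter fun j =>
    (2 * (j : ℕ) + 1 ∈ T ∧ 2 * (j : ℕ) + 2 ∉ T) ∨ (2 * (j : ℕ) + 1 ∉ T ∧ 2 * (j : ℕ) + 2 ∈ T)

/-- A representative `T` is odd if `|T| ≡ g−1 (mod 4)`; the class `[T] ∈ Θ` is odd
precisely when any (every) representative is. -/
def IsOddRep (g : ℕ) (T : Adm g) : Prop := T.1.card % 4 = (g + 3) % 4

/-- Two representatives (satisfying a property `P`) determine classes in the same
`G`-orbit of `Θ` iff they are related by the composite of the `G`-action and the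
equivalence `T ∼ Ω∖T`; the set of `G`-orbits of classes of representatives satisfying
`P` is the quotient by (the equivalence generated by) this relation. -/
def orbRel (g : ℕ) (P : Adm g → Prop) (S S' : {T : Adm g // P T}) : Prop :=
  ∃ v : Fin g → ZMod 2, S'.1.1 = act g v S.1.1 ∨ S'.1.1 = Omega g \ act g v S.1.1

/-- The number of `G`-orbits of classes `[T] ∈ Θ` whose representatives satisfy `P`. -/
noncomputable def numOrbits (g : ℕ) (P : Adm g → Prop) : ℕ :=
  Nat.card (Quot (orbRel g P))


open Finset

lemma st16_mem_Omega {g k : ℕ} : k ∈ Omega g ↔ 1 ≤ k ∧ k ≤ 2*g+2 := by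
  simp [Omega, Finset.mem_Icc]

lemma st16_tau_out (g : ℕ) (v : Fin g → ZMod 2) {k : ℕ} (h : ¬(1 ≤ k ∧ k ≤ 2*g)) :
    tau g v k = k := dif_neg h

lemma st16_tau_lo (g : ℕ) (v : Fin g → ZMod 2) (j : Fin g) :
    tau g v (2*(j:ℕ)+1) = if v j = 1 then 2*(j:ℕ)+2 else 2*(j:ℕ)+1 := by
  have hj := j.2
  have hc : 1 ≤ 2*(j:ℕ)+1 ∧ 2*(j:ℕ)+1 ≤ 2*g := by omega
  unfold tau
  rw [dif_pos hc]
  have h1 : (2*(j:ℕ)+1-1)/2 = (j:ℕ) := by omega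
  simp only [h1, Fin.eta]
  have h2 : (2*(j:ℕ)+1) % 2 = 1 := by omega
  simp [h2]

lemma st16_tau_hi (g : ℕ) (v : Fin g → ZMod 2) (j : Fin g) :
    tau g v (2*(j:ℕ)+2) = if v j = 1 then 2*(j:ℕ)+1 else 2*(j:ℕ)+2 := by
  have hj := j.2
  have hc : 1 ≤ 2*(j:ℕ)+2 ∧ 2*(j:ℕ)+2 ≤ 2*g := by omega
  unfold tau
  rw [dif_pos hc]
  have h1 : (2*(j:ℕ)+2-1)/2 = (j:ℕ) := by omega
  simp only [h1, Fin.eta]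
  have h2 : ¬((2*(j:ℕ)+2) % 2 = 1) := by omega
  simp [h2, show 2*(j:ℕ)+2-1 = 2*(j:ℕ)+1 from by omega]

lemma st16_shape {g k : ℕ} (h1 : 1 ≤ k) (h2 : k ≤ 2*g) :
    ∃ j : Fin g, k = 2*(j:ℕ)+1 ∨ k = 2*(j:ℕ)+2 :=
  ⟨⟨(k-1)/2, by omega⟩, by simp only []; omega⟩

lemma st16_tau_invol (g : ℕ) (v : Fin g → ZMod 2) : Function.Involutive (tau g v) := by
  intro k
  by_cases h : 1 ≤ k ∧ k ≤ 2*g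
  · obtain ⟨j, hj | hj⟩ := st16_shape h.1 h.2 <;> subst hj <;>
      by_cases hv : v j = 1 <;>
      simp [st16_tau_lo, st16_tau_hi, hv]
  · rw [st16_tau_out g v h, st16_tau_out g v h]

lemma st16_mem_act {g : ℕ} {v : Fin g → ZMod 2} {T : Finset ℕ} {k : ℕ} :
    k ∈ act g v T ↔ tau g v k ∈ T := by
  unfold act
  constructor
  · intro hk
    obtain ⟨m, hm, rfl⟩ := Finset.mem_image.mp hk
    rwa [st16_tau_invol g v m]
  · intro h
    exact Finset.mem_image.mpr ⟨tau g v k, h, st16_tau_invol g v k⟩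

lemma st16_tau_mem_Omega {g : ℕ} {v : Fin g → ZMod 2} {k : ℕ} :
    tau g v k ∈ Omega g ↔ k ∈ Omega g := by
  by_cases h : 1 ≤ k ∧ k ≤ 2*g
  · obtain ⟨j, hj | hj⟩ := st16_shape h.1 h.2 <;> subst hj <;>
      have hj2 := j.2 <;>
      by_cases hv : v j = 1 <;>
      simp [st16_tau_lo, st16_tau_hi, hv, st16_mem_Omega] <;> omega
  · rw [st16_tau_out g v h]

lemma st16_act_subset {g : ℕ} {v : Fin g → ZMod 2} {T : Finset ℕ} (hT : T ⊆ Omega g) :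
    act g v T ⊆ Omega g := by
  intro k hk
  rw [st16_mem_act] at hk
  exact st16_tau_mem_Omega.mp (hT hk)

lemma st16_act_sdiff {g : ℕ} {v : Fin g → ZMod 2} {T : Finset ℕ} :
    act g v (Omega g \ T) = Omega g \ act g v T := by
  ext k
  rw [st16_mem_act, Finset.mem_sdiff, Finset.mem_sdiff, st16_mem_act, st16_tau_mem_Omega]

lemma st16_ATset_act (g : ℕ) (v : Fin g → ZMod 2) (T : Finset ℕ) :
    ATset g (act g v T) = ATset g T := by
  ext j
  simp only [ATset, Finset.mem_filter, Finset.mem_univ, true_and, st16_mem_act]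
  by_cases hv : v j = 1 <;> simp [st16_tau_lo, st16_tau_hi, hv] <;> tauto

lemma st16_ATset_sdiff {g : ℕ} {T : Finset ℕ} (hT : T ⊆ Omega g) :
    ATset g (Omega g \ T) = ATset g T := by
  ext j
  have hj := j.2
  have h1 : 2*(j:ℕ)+1 ∈ Omega g := st16_mem_Omega.mpr (by omega)
  have h2 : 2*(j:ℕ)+2 ∈ Omega g := st16_mem_Omega.mpr (by omega)
  simp only [ATset, Finset.mem_filter, Finset.mem_univ, true_and, Finset.mem_sdiff]
  tauto

lemma st16_card_Omega (g : ℕ) : (Omega g).card = 2*g+2 := by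
  simp [Omega]

lemma st16_card_le {g : ℕ} {T : Finset ℕ} (hT : T ⊆ Omega g) : T.card ≤ 2*g+2 :=
  (Finset.card_le_card hT).trans_eq (st16_card_Omega g)

lemma st16_card_sdiff {g : ℕ} {T : Finset ℕ} (hT : T ⊆ Omega g) :
    (Omega g \ T).card = 2*g+2 - T.card := by
  rw [Finset.card_sdiff_of_subset hT, st16_card_Omega]

lemma st16_sum_Icc (f : ℕ → ℕ) (n : ℕ) :
    ∑ k ∈ Finset.Icc 1 (2*n), f k = ∑ j ∈ Finset.range n, (f (2*j+1) + f (2*j+2)) := by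
  induction n with
  | zero => simp
  | succ n ih =>
    have h : Finset.Icc 1 (2*(n+1)) = insert (2*n+1) (insert (2*n+2) (Finset.Icc 1 (2*n))) := by
      ext k; simp [Finset.mem_Icc]; omega
    rw [h, Finset.sum_insert (by simp [Finset.mem_Icc]),
      Finset.sum_insert (by simp [Finset.mem_Icc]), ih, Finset.sum_range_succ]
    ring

lemma st16_card_split {g : ℕ} {T : Finset ℕ} (hT : T ⊆ Omega g) :
    T.card = (∑ j : Fin g, ((if 2*(j:ℕ)+1 ∈ T then 1 else 0) + (if 2*(j:ℕ)+2 ∈ T then 1 else 0)))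
      + ((if 2*g+1 ∈ T then 1 else 0) + (if 2*g+2 ∈ T then 1 else 0)) := by
  have h0 : T.card = ∑ k ∈ Omega g, (if k ∈ T then 1 else 0) := by
    rw [← Finset.card_filter]
    congr 1
    ext k
    simp only [Finset.mem_filter]
    exact ⟨fun h => ⟨hT h, h⟩, fun h => h.2⟩
  have hOm : Omega g = Finset.Icc 1 (2*(g+1)) := by
    rw [show 2*(g+1) = 2*g+2 from by ring]; rfl
  rw [h0, hOm, st16_sum_Icc, Finset.sum_range_succ,
    ← Fin.sum_univ_eq_sum_range (fun j => ((if 2*j+1 ∈ T then 1 else 0) + (if 2*j+2 ∈ T then 1 else 0)))]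

lemma st16_card_formula {g : ℕ} {A : Finset (Fin g)} {T : Finset ℕ}
    (hT : T ⊆ Omega g) (hA : ATset g T = A) :
    T.card = A.card + 2 * (Finset.univ.filter (fun j : Fin g => j ∉ A ∧ 2*(j:ℕ)+2 ∈ T)).card
      + ((if 2*g+1 ∈ T then 1 else 0) + (if 2*g+2 ∈ T then 1 else 0)) := by
  rw [st16_card_split hT]
  congr 1
  rw [← Finset.sum_filter_add_sum_filter_not Finset.univ (fun j : Fin g => j ∈ A)]
  have e1 : ∀ j ∈ Finset.univ.filter (fun j : Fin g => j ∈ A),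
      ((if 2*(j:ℕ)+1 ∈ T then 1 else 0) + (if 2*(j:ℕ)+2 ∈ T then 1 else 0)) = 1 := by
    intro j hj
    have hjA : j ∈ A := (Finset.mem_filter.mp hj).2
    rw [← hA] at hjA
    simp only [ATset, Finset.mem_filter, Finset.mem_univ, true_and] at hjA
    rcases hjA with ⟨h1, h2⟩ | ⟨h1, h2⟩ <;> simp [h1, h2]
  have e2 : ∀ j ∈ Finset.univ.filter (fun j : Fin g => ¬ j ∈ A),
      ((if 2*(j:ℕ)+1 ∈ T then 1 else 0) + (if 2*(j:ℕ)+2 ∈ T then 1 else 0))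
        = 2 * (if 2*(j:ℕ)+2 ∈ T then 1 else 0) := by
    intro j hj
    have hjA : ¬ j ∈ A := (Finset.mem_filter.mp hj).2
    rw [← hA] at hjA
    simp only [ATset, Finset.mem_filter, Finset.mem_univ, true_and, not_or, not_and] at hjA
    by_cases h1 : 2*(j:ℕ)+1 ∈ T <;> by_cases h2 : 2*(j:ℕ)+2 ∈ T <;>
      simp [h1, h2] at hjA ⊢ <;> tauto
  rw [Finset.sum_congr rfl e1, Finset.sum_congr rfl e2, Finset.sum_const, smul_eq_mul, mul_one,
    ← Finset.mul_sum, ← Finset.card_filter, Finset.filter_filter]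
  congr 1
  · congr 1
    ext j
    simp

/-- Normalization: replace `T` by its complement if `2g+1 ∈ T`. -/
def st16NT (g : ℕ) (T : Finset ℕ) : Finset ℕ := if 2*g+1 ∈ T then Omega g \ T else T

/-- The invariant of a representative. -/
def st16chi (g : ℕ) (A : Finset (Fin g)) (T : Finset ℕ) : (Fin g → Bool) × Bool :=
  (fun j => if j ∈ A then false else decide (2*(j:ℕ)+2 ∈ st16NT g T),
    decide (2*g+2 ∈ st16NT g T))

/-- The predicate cutting out realizable invariants. -/
def st16Py (g : ℕ) (A : Finset (Fin g)) (y : (Fin g → Bool) × Bool) : Prop :=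
  (∀ j ∈ A, y.1 j = false) ∧
  (A.card + 2 * (Finset.univ.filter (fun j => y.1 j = true)).card
    + (if y.2 then 1 else 0)) % 4 = (g+3) % 4

instance st16Py_dec (g : ℕ) (A : Finset (Fin g)) : DecidablePred (st16Py g A) := fun y =>
  inferInstanceAs (Decidable (_ ∧ _))

def st16memB (g : ℕ) (A : Finset (Fin g)) (y : (Fin g → Bool) × Bool) (k : ℕ) : Bool :=
  if h : 1 ≤ k ∧ k ≤ 2*g then
    (if k % 2 = 1 then (decide ((⟨(k-1)/2, by omega⟩ : Fin g) ∈ A) || y.1 ⟨(k-1)/2, by omega⟩)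
     else (y.1 ⟨(k-1)/2, by omega⟩ && !(decide ((⟨(k-1)/2, by omega⟩ : Fin g) ∈ A))))
  else decide (k = 2*g+2) && y.2

/-- The canonical representative built from an invariant. -/
def st16B (g : ℕ) (A : Finset (Fin g)) (y : (Fin g → Bool) × Bool) : Finset ℕ :=
  (Omega g).filter (fun k => st16memB g A y k = true)

lemma st16_NT_subset {g : ℕ} {T : Finset ℕ} (hT : T ⊆ Omega g) : st16NT g T ⊆ Omega g := by
  unfold st16NT; split_ifs
  exacts [Finset.sdiff_subset, hT]

lemma st16_notMem_NT {g : ℕ} (T : Finset ℕ) : 2*g+1 ∉ st16NT g T := by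
  unfold st16NT; split_ifs with h
  · simp [h]
  · exact h

lemma st16_ATset_NT {g : ℕ} {T : Finset ℕ} (hT : T ⊆ Omega g) :
    ATset g (st16NT g T) = ATset g T := by
  unfold st16NT; split_ifs with h
  · exact st16_ATset_sdiff hT
  · rfl

lemma st16_card_NT_odd {g : ℕ} {T : Finset ℕ} (hT : T ⊆ Omega g)
    (h : T.card % 4 = (g+3) % 4) : (st16NT g T).card % 4 = (g+3) % 4 := by
  unfold st16NT; split_ifs with hm
  · rw [st16_card_sdiff hT]
    have := st16_card_le hT
    omega
  · exact h

lemma st16_NT_sdiff {g : ℕ} {T : Finset ℕ} (hT : T ⊆ Omega g) :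
    st16NT g (Omega g \ T) = st16NT g T := by
  unfold st16NT
  have hmem : 2*g+1 ∈ Omega g := st16_mem_Omega.mpr (by omega)
  by_cases h : 2*g+1 ∈ T
  · rw [if_neg (by simp [Finset.mem_sdiff, h]), if_pos h]
  · rw [if_pos (Finset.mem_sdiff.mpr ⟨hmem, h⟩), if_neg h, Finset.sdiff_sdiff_eq_self hT]

lemma st16_NT_act {g : ℕ} {v : Fin g → ZMod 2} {T : Finset ℕ} (hT : T ⊆ Omega g) :
    st16NT g (act g v T) = act g v (st16NT g T) := by
  have hfix : tau g v (2*g+1) = 2*g+1 := st16_tau_out g v (by omega)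
  have hmem : (2*g+1 ∈ act g v T) ↔ (2*g+1 ∈ T) := by rw [st16_mem_act, hfix]
  unfold st16NT
  by_cases h : 2*g+1 ∈ T
  · rw [if_pos h, if_pos (hmem.mpr h), st16_act_sdiff]
  · rw [if_neg h, if_neg (fun hc => h (hmem.mp hc))]

lemma st16_chi_sdiff {g : ℕ} {A : Finset (Fin g)} {T : Finset ℕ} (hT : T ⊆ Omega g) :
    st16chi g A (Omega g \ T) = st16chi g A T := by
  unfold st16chi; rw [st16_NT_sdiff hT]

lemma st16_chi_act {g : ℕ} {A : Finset (Fin g)} {v : Fin g → ZMod 2} {T : Finset ℕ}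
    (hT : T ⊆ Omega g) (hA : ATset g T = A) :
    st16chi g A (act g v T) = st16chi g A T := by
  have hATN : ATset g (st16NT g T) = A := by rw [st16_ATset_NT hT, hA]
  have hfix2 : tau g v (2*g+2) = 2*g+2 := st16_tau_out g v (by omega)
  unfold st16chi
  rw [st16_NT_act hT]
  refine Prod.ext ?_ ?_
  · funext j
    by_cases hjA : j ∈ A
    · simp [hjA]
    · simp only [if_neg hjA]
      refine decide_eq_decide.mpr ?_
      rw [st16_mem_act, st16_tau_hi]
      by_cases hv : v j = 1
      · rw [if_pos hv]
        have hj' : j ∉ ATset g (st16NT g T) := by rw [hATN]; exact hjA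
        simp only [ATset, Finset.mem_filter, Finset.mem_univ, true_and, not_or, not_and] at hj'
        tauto
      · rw [if_neg hv]
  · refine decide_eq_decide.mpr ?_
    rw [st16_mem_act, hfix2]

lemma st16_chi_rel {g : ℕ} {A : Finset (Fin g)} {S S' : Finset ℕ}
    (hS : S ⊆ Omega g) (hA : ATset g S = A) (v : Fin g → ZMod 2)
    (h : S' = act g v S ∨ S' = Omega g \ act g v S) :
    st16chi g A S' = st16chi g A S := by
  rcases h with rfl | rfl
  · exact st16_chi_act hS hA
  · rw [st16_chi_sdiff (st16_act_subset hS), st16_chi_act hS hA]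

set_option maxHeartbeats 1000000 in
lemma st16_key {g : ℕ} {A : Finset (Fin g)} {T0 U0 : Finset ℕ}
    (hT0sub : T0 ⊆ Omega g) (hU0sub : U0 ⊆ Omega g)
    (hAT0 : ATset g T0 = A) (hAU0 : ATset g U0 = A)
    (hnmT : 2*g+1 ∉ T0) (hnmU : 2*g+1 ∉ U0)
    (hchi1 : ∀ j : Fin g, j ∉ A → ((2*(j:ℕ)+2 ∈ T0) ↔ (2*(j:ℕ)+2 ∈ U0)))
    (hchi2 : (2*g+2 ∈ T0) ↔ (2*g+2 ∈ U0))
    (v : Fin g → ZMod 2)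
    (hvspec : ∀ j : Fin g, (v j = 1) ↔ ¬((2*(j:ℕ)+2 ∈ T0) ↔ (2*(j:ℕ)+2 ∈ U0))) :
    act g v T0 = U0 := by
  ext k
  rw [st16_mem_act]
  by_cases hk : 1 ≤ k ∧ k ≤ 2*g
  · obtain ⟨j, hj | hj⟩ := st16_shape hk.1 hk.2
    all_goals {
      have hTj : (j ∈ A) ↔ ((2*(j:ℕ)+1 ∈ T0 ∧ 2*(j:ℕ)+2 ∉ T0) ∨ (2*(j:ℕ)+1 ∉ T0 ∧ 2*(j:ℕ)+2 ∈ T0)) := by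
        rw [← hAT0]; simp [ATset]
      have hUj : (j ∈ A) ↔ ((2*(j:ℕ)+1 ∈ U0 ∧ 2*(j:ℕ)+2 ∉ U0) ∨ (2*(j:ℕ)+1 ∉ U0 ∧ 2*(j:ℕ)+2 ∈ U0)) := by
        rw [← hAU0]; simp [ATset]
      subst hj
      by_cases hm : (2*(j:ℕ)+2 ∈ T0) ↔ (2*(j:ℕ)+2 ∈ U0)
      · have hv1 : ¬ (v j = 1) := fun h => (hvspec j).mp h hm
        first
        | rw [st16_tau_lo g v j, if_neg hv1]
        | rw [st16_tau_hi g v j, if_neg hv1]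
        by_cases hjA : j ∈ A
        · have h1 := hTj.mp hjA
          have h2 := hUj.mp hjA
          tauto
        · have h1 := (not_iff_not.mpr hTj).mp hjA
          have h2 := (not_iff_not.mpr hUj).mp hjA
          tauto
      · have hjA : j ∈ A := by
          by_contra hjA
          exact hm (hchi1 j hjA)
        have hv1 : v j = 1 := (hvspec j).mpr hm
        have h1 := hTj.mp hjA
        have h2 := hUj.mp hjA
        first
        | rw [st16_tau_lo g v j, if_pos hv1]
        | rw [st16_tau_hi g v j, if_pos hv1]
        tauto
    }
  · rw [st16_tau_out g v hk]
    by_cases h1 : k = 2*g+1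
    · subst h1
      simp [hnmT, hnmU]
    · by_cases h2 : k = 2*g+2
      · subst h2; exact hchi2
      · constructor
        · intro h; exact absurd (st16_mem_Omega.mp (hT0sub h)) (by omega)
        · intro h; exact absurd (st16_mem_Omega.mp (hU0sub h)) (by omega)

lemma st16_chi_inj {g : ℕ} {A : Finset (Fin g)} {T U : Finset ℕ}
    (hT : T ⊆ Omega g) (hU : U ⊆ Omega g)
    (hAT : ATset g T = A) (hAU : ATset g U = A)
    (hchi : st16chi g A T = st16chi g A U) :
    ∃ v : Fin g → ZMod 2, U = act g v T ∨ U = Omega g \ act g v T := by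
  set T0 := st16NT g T with hT0
  set U0 := st16NT g U with hU0
  have hT0sub : T0 ⊆ Omega g := st16_NT_subset hT
  have hU0sub : U0 ⊆ Omega g := st16_NT_subset hU
  have hAT0 : ATset g T0 = A := by rw [hT0, st16_ATset_NT hT, hAT]
  have hAU0 : ATset g U0 = A := by rw [hU0, st16_ATset_NT hU, hAU]
  have hchi1 : ∀ j : Fin g, j ∉ A → ((2*(j:ℕ)+2 ∈ T0) ↔ (2*(j:ℕ)+2 ∈ U0)) := by
    intro j hj
    have h := congrFun (congrArg Prod.fst hchi) j
    simp only [st16chi, if_neg hj, decide_eq_decide] at h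
    exact h
  have hchi2 : (2*g+2 ∈ T0) ↔ (2*g+2 ∈ U0) := by
    have h := congrArg Prod.snd hchi
    simp only [st16chi, decide_eq_decide] at h
    exact h
  set v : Fin g → ZMod 2 :=
    fun j => if (2*(j:ℕ)+2 ∈ T0) ↔ (2*(j:ℕ)+2 ∈ U0) then (0 : ZMod 2) else 1 with hv
  have hvspec : ∀ j : Fin g, (v j = 1) ↔ ¬((2*(j:ℕ)+2 ∈ T0) ↔ (2*(j:ℕ)+2 ∈ U0)) := by
    intro j
    by_cases hm : (2*(j:ℕ)+2 ∈ T0) ↔ (2*(j:ℕ)+2 ∈ U0)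
    · rw [hv]
      simp only [if_pos hm]
      exact ⟨fun h => absurd h.symm one_ne_zero, fun h => absurd hm h⟩
    · rw [hv]
      simp only [if_neg hm]
      exact ⟨fun _ => hm, fun _ => trivial⟩
  have hact : act g v T0 = U0 :=
    st16_key hT0sub hU0sub hAT0 hAU0 (st16_notMem_NT T) (st16_notMem_NT U) hchi1 hchi2 v hvspec
  refine ⟨v, ?_⟩
  by_cases hTm : 2*g+1 ∈ T <;> by_cases hUm : 2*g+1 ∈ U
  · left
    have e1 : T0 = Omega g \ T := by rw [hT0]; unfold st16NT; rw [if_pos hTm]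
    have e2 : U0 = Omega g \ U := by rw [hU0]; unfold st16NT; rw [if_pos hUm]
    rw [e1, e2, st16_act_sdiff] at hact
    calc U = Omega g \ (Omega g \ U) := (Finset.sdiff_sdiff_eq_self hU).symm
    _ = Omega g \ (Omega g \ act g v T) := by rw [hact]
    _ = act g v T := Finset.sdiff_sdiff_eq_self (st16_act_subset hT)
  · right
    have e1 : T0 = Omega g \ T := by rw [hT0]; unfold st16NT; rw [if_pos hTm]
    have e2 : U0 = U := by rw [hU0]; unfold st16NT; rw [if_neg hUm]
    rw [e1, e2, st16_act_sdiff] at hact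
    exact hact.symm
  · right
    have e1 : T0 = T := by rw [hT0]; unfold st16NT; rw [if_neg hTm]
    have e2 : U0 = Omega g \ U := by rw [hU0]; unfold st16NT; rw [if_pos hUm]
    rw [e1, e2] at hact
    calc U = Omega g \ (Omega g \ U) := (Finset.sdiff_sdiff_eq_self hU).symm
    _ = Omega g \ act g v T := by rw [hact]
  · left
    have e1 : T0 = T := by rw [hT0]; unfold st16NT; rw [if_neg hTm]
    have e2 : U0 = U := by rw [hU0]; unfold st16NT; rw [if_neg hUm]
    rw [e1, e2] at hact
    exact hact.symm

lemma st16_mem_B_lo {g : ℕ} {A : Finset (Fin g)} {y : (Fin g → Bool) × Bool} (j : Fin g) :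
    2*(j:ℕ)+1 ∈ st16B g A y ↔ (j ∈ A ∨ y.1 j = true) := by
  have hj := j.2
  have hc : 1 ≤ 2*(j:ℕ)+1 ∧ 2*(j:ℕ)+1 ≤ 2*g := by omega
  have hm : 2*(j:ℕ)+1 ∈ Omega g := st16_mem_Omega.mpr (by omega)
  simp only [st16B, Finset.mem_filter, hm, true_and]
  unfold st16memB
  rw [dif_pos hc]
  have h1 : (2*(j:ℕ)+1-1)/2 = (j:ℕ) := by omega
  simp only [h1, Fin.eta]
  have h2 : (2*(j:ℕ)+1) % 2 = 1 := by omega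
  simp [h2]

lemma st16_mem_B_hi {g : ℕ} {A : Finset (Fin g)} {y : (Fin g → Bool) × Bool} (j : Fin g) :
    2*(j:ℕ)+2 ∈ st16B g A y ↔ (y.1 j = true ∧ j ∉ A) := by
  have hj := j.2
  have hc : 1 ≤ 2*(j:ℕ)+2 ∧ 2*(j:ℕ)+2 ≤ 2*g := by omega
  have hm : 2*(j:ℕ)+2 ∈ Omega g := st16_mem_Omega.mpr (by omega)
  simp only [st16B, Finset.mem_filter, hm, true_and]
  unfold st16memB
  rw [dif_pos hc]
  have h1 : (2*(j:ℕ)+2-1)/2 = (j:ℕ) := by omega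
  simp only [h1, Fin.eta]
  have h2 : ¬ ((2*(j:ℕ)+2) % 2 = 1) := by omega
  simp [h2]

lemma st16_mem_B_last1 {g : ℕ} {A : Finset (Fin g)} {y : (Fin g → Bool) × Bool} :
    2*g+1 ∉ st16B g A y := by
  have hc : ¬ (1 ≤ 2*g+1 ∧ 2*g+1 ≤ 2*g) := by omega
  simp only [st16B, Finset.mem_filter]
  unfold st16memB
  rw [dif_neg hc]
  simp

lemma st16_mem_B_last2 {g : ℕ} {A : Finset (Fin g)} {y : (Fin g → Bool) × Bool} :
    2*g+2 ∈ st16B g A y ↔ y.2 = true := by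
  have hc : ¬ (1 ≤ 2*g+2 ∧ 2*g+2 ≤ 2*g) := by omega
  have hm : 2*g+2 ∈ Omega g := st16_mem_Omega.mpr (by omega)
  simp only [st16B, Finset.mem_filter, hm, true_and]
  unfold st16memB
  rw [dif_neg hc]
  simp

lemma st16_B_subset {g : ℕ} {A : Finset (Fin g)} {y : (Fin g → Bool) × Bool} :
    st16B g A y ⊆ Omega g := Finset.filter_subset _ _

lemma st16_ATset_B {g : ℕ} {A : Finset (Fin g)} {y : (Fin g → Bool) × Bool}
    (hoff : ∀ j ∈ A, y.1 j = false) : ATset g (st16B g A y) = A := by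
  ext j
  simp only [ATset, Finset.mem_filter, Finset.mem_univ, true_and,
    st16_mem_B_lo, st16_mem_B_hi]
  by_cases hj : j ∈ A
  · have h := hoff j hj
    simp [hj, h]
  · simp only [hj]
    cases hy : y.1 j <;> simp [hy, hj]

lemma st16_card_B {g : ℕ} {A : Finset (Fin g)} {y : (Fin g → Bool) × Bool}
    (hoff : ∀ j ∈ A, y.1 j = false) :
    (st16B g A y).card = A.card + 2 * (Finset.univ.filter (fun j => y.1 j = true)).card
      + (if y.2 then 1 else 0) := by
  rw [st16_card_formula st16_B_subset (st16_ATset_B hoff)]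
  have hW : (Finset.univ.filter (fun j : Fin g => j ∉ A ∧ 2*(j:ℕ)+2 ∈ st16B g A y))
      = (Finset.univ.filter (fun j : Fin g => y.1 j = true)) := by
    ext j
    simp only [Finset.mem_filter, Finset.mem_univ, true_and, st16_mem_B_hi]
    constructor
    · rintro ⟨-, h, -⟩; exact h
    · intro h
      have hj : j ∉ A := fun hjA => by simp [hoff j hjA] at h
      exact ⟨hj, h, hj⟩
  rw [hW, if_neg st16_mem_B_last1]
  have ht : (if 2*g+2 ∈ st16B g A y then 1 else 0) = (if y.2 then 1 else 0) := by
    by_cases h : y.2 = true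
    · rw [if_pos (st16_mem_B_last2.mpr h), if_pos h]
    · rw [if_neg (fun hc => h (st16_mem_B_last2.mp hc)), if_neg h]
  rw [ht, Nat.zero_add]

lemma st16_chi_B {g : ℕ} {A : Finset (Fin g)} {y : (Fin g → Bool) × Bool}
    (hoff : ∀ j ∈ A, y.1 j = false) : st16chi g A (st16B g A y) = y := by
  have hNT : st16NT g (st16B g A y) = st16B g A y := if_neg st16_mem_B_last1
  unfold st16chi
  rw [hNT]
  refine Prod.ext ?_ ?_
  · funext j
    by_cases hj : j ∈ A
    · simp [hj, (hoff j hj).symm]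
    · simp only [hj, if_false]
      cases hy : y.1 j <;> simp [st16_mem_B_hi, hy, hj]
  · cases hy : y.2 <;> simp [st16_mem_B_last2, hy]

lemma st16_Py_chi {g : ℕ} {A : Finset (Fin g)} {T : Finset ℕ}
    (hT : T ⊆ Omega g) (hAT : ATset g T = A) (hodd : T.card % 4 = (g+3) % 4) :
    st16Py g A (st16chi g A T) := by
  set T0 := st16NT g T with hT0def
  have hT0sub : T0 ⊆ Omega g := st16_NT_subset hT
  have hAT0 : ATset g T0 = A := by rw [hT0def, st16_ATset_NT hT, hAT]
  have hodd0 : T0.card % 4 = (g+3) % 4 := st16_card_NT_odd hT hodd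
  have hform := st16_card_formula hT0sub hAT0
  rw [if_neg (st16_notMem_NT T)] at hform
  constructor
  · intro j hj; simp [st16chi, hj]
  · have hW : (Finset.univ.filter (fun j : Fin g => (st16chi g A T).1 j = true)).card
        = (Finset.univ.filter (fun j : Fin g => j ∉ A ∧ 2*(j:ℕ)+2 ∈ T0)).card := by
      congr 1
      ext j
      by_cases hj : j ∈ A <;> simp [st16chi, hj, ← hT0def]
    have ht : (if (st16chi g A T).2 then 1 else 0) = (if 2*g+2 ∈ T0 then 1 else 0) := by
      by_cases h : 2*g+2 ∈ T0
      · rw [if_pos h]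
        simp [st16chi, ← hT0def, h]
      · rw [if_neg h]
        simp [st16chi, ← hT0def, h]
    rw [hW, ht]
    omega

lemma st16_count_free {g : ℕ} (A : Finset (Fin g)) :
    (Finset.univ.filter (fun b : Fin g → Bool => ∀ j ∈ A, b j = false)).card
      = 2 ^ (g - A.card) := by
  classical
  rw [Finset.card_bij' (i := fun (b : Fin g → Bool) (_ : b ∈ Finset.univ.filter (fun b => ∀ j ∈ A, b j = false)) => fun s : {j : Fin g // j ∉ A} => b s.1)
      (j := fun (f : {j : Fin g // j ∉ A} → Bool) (_ : f ∈ (Finset.univ : Finset ({j : Fin g // j ∉ A} → Bool))) => fun j : Fin g => if h : j ∈ A then false else f ⟨j, h⟩)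
      (hi := fun b hb => Finset.mem_univ _)
      (hj := by
        intro f hf
        simp only [Finset.mem_filter, Finset.mem_univ, true_and]
        intro j hj
        rw [dif_pos hj])
      (left_inv := by
        intro b hb
        simp only [Finset.mem_filter, Finset.mem_univ, true_and] at hb
        funext j
        by_cases hj : j ∈ A
        · simp [hj, hb j hj]
        · simp [hj])
      (right_inv := by
        intro f hf
        funext s
        simp [s.2])]
  rw [Finset.card_univ, Fintype.card_fun, Fintype.card_bool]
  congr 1
  rw [Fintype.card_subtype_compl, Fintype.card_coe, Fintype.card_fin]

lemma st16_flip_bij {g : ℕ} {A : Finset (Fin g)} {j0 : Fin g} (hj0 : j0 ∉ A) (c' : ℕ) :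
    (Finset.univ.filter (fun b : Fin g → Bool =>
      (∀ j ∈ A, b j = false) ∧
        (Finset.univ.filter (fun j => b j = true)).card % 2 = c' % 2)).card =
    (Finset.univ.filter (fun b : Fin g → Bool =>
      (∀ j ∈ A, b j = false) ∧
        (Finset.univ.filter (fun j => b j = true)).card % 2 = (c'+1) % 2)).card := by
  classical
  have hWflip : ∀ b : Fin g → Bool,
      (Finset.univ.filter (fun j => Function.update b j0 (!b j0) j = true)).card =
      if b j0 = true then (Finset.univ.filter (fun j => b j = true)).card - 1
      else (Finset.univ.filter (fun j => b j = true)).card + 1 := by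
    intro b
    by_cases hb : b j0 = true
    · rw [if_pos hb]
      have he : Finset.univ.filter (fun j => Function.update b j0 (!b j0) j = true)
          = (Finset.univ.filter (fun j => b j = true)).erase j0 := by
        ext j
        by_cases hj : j = j0
        · subst hj; simp [Function.update_self, hb]
        · simp [Function.update_of_ne hj, hj]
      rw [he, Finset.card_erase_of_mem (by simp [hb])]
    · rw [if_neg hb]
      rw [Bool.not_eq_true] at hb
      have he : Finset.univ.filter (fun j => Function.update b j0 (!b j0) j = true)
          = insert j0 (Finset.univ.filter (fun j => b j = true)) := by
        ext j
        by_cases hj : j = j0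
        · subst hj; simp [Function.update_self, hb]
        · simp [Function.update_of_ne hj, hj]
      rw [he, Finset.card_insert_of_notMem (by simp [hb])]
  have hmemflip : ∀ (b : Fin g → Bool) (d : ℕ),
      b ∈ Finset.univ.filter (fun b : Fin g → Bool =>
        (∀ j ∈ A, b j = false) ∧
          (Finset.univ.filter (fun j => b j = true)).card % 2 = d % 2) →
      Function.update b j0 (!b j0) ∈ Finset.univ.filter (fun b : Fin g → Bool =>
        (∀ j ∈ A, b j = false) ∧
          (Finset.univ.filter (fun j => b j = true)).card % 2 = (d+1) % 2) := by
    intro b d hb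
    simp only [Finset.mem_filter, Finset.mem_univ, true_and] at hb ⊢
    refine ⟨?_, ?_⟩
    · intro j hj
      rw [Function.update_of_ne (by rintro rfl; exact hj0 hj), hb.1 j hj]
    · rw [hWflip b]
      by_cases hb' : b j0 = true
      · rw [if_pos hb']
        have hpos : 0 < (Finset.univ.filter (fun j => b j = true)).card :=
          Finset.card_pos.mpr ⟨j0, by simp [hb']⟩
        have h2 := hb.2
        omega
      · rw [if_neg hb']
        have h2 := hb.2
        omega
  have hflipflip : ∀ b : Fin g → Bool, Function.update (Function.update b j0 (!b j0)) j0
      (!(Function.update b j0 (!b j0)) j0) = b := by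
    intro b
    funext j
    by_cases hj : j = j0
    · subst hj
      simp [Function.update_self]
    · simp [Function.update_of_ne hj]
  refine Finset.card_bij' (fun b _ => Function.update b j0 (!b j0))
    (fun b _ => Function.update b j0 (!b j0))
    (fun b hb => hmemflip b c' hb)
    (fun b hb => ?_) (fun b _ => hflipflip b) (fun b _ => hflipflip b)
  have h3 := hmemflip b (c'+1) hb
  simp only [Finset.mem_filter, Finset.mem_univ, true_and] at h3 ⊢
  refine ⟨h3.1, ?_⟩
  have h2 := h3.2
  omega

lemma st16_count_parity {g : ℕ} {A : Finset (Fin g)} (hA : A.card < g) (c : ℕ) :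
    (Finset.univ.filter (fun b : Fin g → Bool =>
      (∀ j ∈ A, b j = false) ∧
        (Finset.univ.filter (fun j => b j = true)).card % 2 = c % 2)).card
      = 2 ^ (g - 1 - A.card) := by
  classical
  have hAne : A ≠ Finset.univ := by
    intro h
    rw [h, Finset.card_univ, Fintype.card_fin] at hA
    omega
  obtain ⟨j0, hj0⟩ : ∃ j0 : Fin g, j0 ∉ A := by
    by_contra h
    push_neg at h
    exact hAne (Finset.eq_univ_iff_forall.mpr h)
  have he : g - A.card = (g - 1 - A.card) + 1 := by omega
  have hpow : 2 ^ (g - A.card) = 2 * 2 ^ (g - 1 - A.card) := by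
    rw [he, pow_succ]; ring
  have hpart : (Finset.univ.filter (fun b : Fin g → Bool =>
        (∀ j ∈ A, b j = false) ∧
          (Finset.univ.filter (fun j => b j = true)).card % 2 = c % 2)).card
      + (Finset.univ.filter (fun b : Fin g → Bool =>
        (∀ j ∈ A, b j = false) ∧
          (Finset.univ.filter (fun j => b j = true)).card % 2 = (c+1) % 2)).card
      = 2 ^ (g - A.card) := by
    rw [← st16_count_free A]
    have h1 : (Finset.univ.filter (fun b : Fin g → Bool =>
        (∀ j ∈ A, b j = false) ∧
          (Finset.univ.filter (fun j => b j = true)).card % 2 = c % 2))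
        = (Finset.univ.filter (fun b : Fin g → Bool => ∀ j ∈ A, b j = false)).filter
            (fun b => (Finset.univ.filter (fun j => b j = true)).card % 2 = c % 2) :=
      (Finset.filter_filter _ _ _).symm
    have h2 : (Finset.univ.filter (fun b : Fin g → Bool =>
        (∀ j ∈ A, b j = false) ∧
          (Finset.univ.filter (fun j => b j = true)).card % 2 = (c+1) % 2))
        = (Finset.univ.filter (fun b : Fin g → Bool => ∀ j ∈ A, b j = false)).filter
            (fun b => ¬ ((Finset.univ.filter (fun j => b j = true)).card % 2 = c % 2)) := by
      ext b
      simp only [Finset.mem_filter, Finset.mem_univ, true_and]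
      constructor
      · rintro ⟨hb1, hb2⟩; exact ⟨hb1, by omega⟩
      · rintro ⟨hb1, hb2⟩; exact ⟨hb1, by omega⟩
    rw [h1, h2, Finset.card_filter_add_card_filter_not]
  have hb := st16_flip_bij hj0 c
  rw [← hb, hpow, ← two_mul] at hpart
  exact Nat.eq_of_mul_eq_mul_left (by norm_num) hpart

lemma st16_card_Py_split (g : ℕ) (A : Finset (Fin g)) :
    (Finset.univ.filter (st16Py g A)).card
      = (Finset.univ.filter (fun b : Fin g → Bool => st16Py g A (b, false))).card
        + (Finset.univ.filter (fun b : Fin g → Bool => st16Py g A (b, true))).card := by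
  classical
  have himage : Finset.univ.filter (st16Py g A) =
      ((Finset.univ.filter (fun b : Fin g → Bool => st16Py g A (b, false))).image
        (fun b => (b, false))) ∪
      ((Finset.univ.filter (fun b : Fin g → Bool => st16Py g A (b, true))).image
        (fun b => (b, true))) := by
    ext ⟨b, t⟩
    cases t <;>
      simp [Finset.mem_union, Finset.mem_image, Prod.ext_iff]
  rw [himage, Finset.card_union_of_disjoint, Finset.card_image_of_injective, Finset.card_image_of_injective]
  · intro a b h; simpa using h
  · intro a b h; simpa using h
  · rw [Finset.disjoint_left]
    rintro ⟨b, t⟩ h1 h2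
    simp only [Finset.mem_image, Finset.mem_filter, Finset.mem_univ, true_and, Prod.ext_iff] at h1 h2
    obtain ⟨-, -, -, ht1⟩ := h1
    obtain ⟨-, -, -, ht2⟩ := h2
    exact Bool.false_ne_true (ht1.trans ht2.symm)

lemma st16_count_main {g : ℕ} {A : Finset (Fin g)} (hA : A.card < g) :
    (Finset.univ.filter (st16Py g A)).card = 2 ^ (g - 1 - A.card) := by
  classical
  rw [st16_card_Py_split]
  by_cases hpar : (g + 1 + A.card) % 2 = 0
  · have hfe : Finset.univ.filter (fun b : Fin g → Bool => st16Py g A (b, true)) = ∅ := by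
      rw [Finset.filter_eq_empty_iff]
      rintro b - ⟨h1, h2⟩
      simp only [if_true] at h2
      omega
    have hset : Finset.univ.filter (fun b : Fin g → Bool => st16Py g A (b, false))
        = Finset.univ.filter (fun b : Fin g → Bool =>
            (∀ j ∈ A, b j = false) ∧
              (Finset.univ.filter (fun j => b j = true)).card % 2
                = ((g + 3 + 3 * A.card) / 2) % 2) := by
      ext b
      simp only [Finset.mem_filter, Finset.mem_univ, true_and, st16Py]
      constructor
      · rintro ⟨h1, h2⟩
        simp only [if_neg (Bool.false_ne_true)] at h2
        exact ⟨h1, by omega⟩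
      · rintro ⟨h1, h2⟩
        refine ⟨h1, ?_⟩
        simp only [if_neg (Bool.false_ne_true)]
        omega
    rw [hfe, hset, st16_count_parity hA]
    simp
  · have hfe : Finset.univ.filter (fun b : Fin g → Bool => st16Py g A (b, false)) = ∅ := by
      rw [Finset.filter_eq_empty_iff]
      rintro b - ⟨h1, h2⟩
      simp only [if_neg (Bool.false_ne_true)] at h2
      omega
    have hset : Finset.univ.filter (fun b : Fin g → Bool => st16Py g A (b, true))
        = Finset.univ.filter (fun b : Fin g → Bool =>
            (∀ j ∈ A, b j = false) ∧
              (Finset.univ.filter (fun j => b j = true)).card % 2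
                = ((g + 2 + 3 * A.card) / 2) % 2) := by
      ext b
      simp only [Finset.mem_filter, Finset.mem_univ, true_and, st16Py]
      constructor
      · rintro ⟨h1, h2⟩
        simp only [if_true] at h2
        exact ⟨h1, by omega⟩
      · rintro ⟨h1, h2⟩
        refine ⟨h1, ?_⟩
        simp only [if_true]
        omega
    rw [hfe, hset, st16_count_parity hA]
    simp

lemma st16_count_univ {g : ℕ} (hg : 1 ≤ g) :
    (Finset.univ.filter (st16Py g (Finset.univ : Finset (Fin g)))).card = 0 := by
  classical
  rw [Finset.card_eq_zero, Finset.filter_eq_empty_iff]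
  rintro y - ⟨h1, h2⟩
  have hW : (Finset.univ.filter (fun j : Fin g => y.1 j = true)) = ∅ := by
    rw [Finset.filter_eq_empty_iff]
    intro j _
    rw [h1 j (Finset.mem_univ j)]
    simp
  rw [hW, Finset.card_empty, Finset.card_univ, Fintype.card_fin] at h2
  by_cases hy : y.2 = true
  · rw [if_pos hy] at h2
    omega
  · rw [if_neg hy] at h2
    omega

lemma st16_numOrbits_eq (g : ℕ) (A : Finset (Fin g)) :
    numOrbits g (fun T => IsOddRep g T ∧ ATset g T.1 = A)
      = (Finset.univ.filter (st16Py g A)).card := by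
  classical
  set P : Adm g → Prop := fun T => IsOddRep g T ∧ ATset g T.1 = A with hP
  have hmod2 : ∀ y : {y : (Fin g → Bool) × Bool // st16Py g A y},
      (st16B g A y.1).card % 2 = (g + 1) % 2 := by
    intro y
    have hc := st16_card_B y.2.1
    have h4 := y.2.2
    omega
  have hmod4 : ∀ y : {y : (Fin g → Bool) × Bool // st16Py g A y},
      (st16B g A y.1).card % 4 = (g + 3) % 4 := by
    intro y
    have hc := st16_card_B y.2.1
    have h4 := y.2.2
    omega
  let F : {y : (Fin g → Bool) × Bool // st16Py g A y} → {T : Adm g // P T} := fun y =>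
    ⟨⟨st16B g A y.1, st16_B_subset, hmod2 y⟩, hmod4 y, st16_ATset_B y.2.1⟩
  let f : {y : (Fin g → Bool) × Bool // st16Py g A y} → Quot (orbRel g P) :=
    fun y => Quot.mk _ (F y)
  let L : Quot (orbRel g P) → (Fin g → Bool) × Bool :=
    Quot.lift (fun S : {T : Adm g // P T} => st16chi g A S.1.1)
      (by
        rintro S S' ⟨v, hv⟩
        exact (st16_chi_rel S.1.2.1 S.2.2 v hv).symm)
  have hbij : Function.Bijective f := by
    constructor
    · intro y y' h
      have h3 : st16chi g A (st16B g A y.1) = st16chi g A (st16B g A y'.1) := congrArg L h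
      rw [st16_chi_B y.2.1, st16_chi_B y'.2.1] at h3
      exact Subtype.ext h3
    · intro q
      obtain ⟨S, rfl⟩ := Quot.exists_rep q
      refine ⟨⟨st16chi g A S.1.1, st16_Py_chi S.1.2.1 S.2.2 S.2.1⟩, ?_⟩
      apply Quot.sound
      show ∃ v : Fin g → ZMod 2,
        S.1.1 = act g v (st16B g A (st16chi g A S.1.1)) ∨
        S.1.1 = Omega g \ act g v (st16B g A (st16chi g A S.1.1))
      have hoff : ∀ j ∈ A, (st16chi g A S.1.1).1 j = false := by
        intro j hj; simp [st16chi, hj]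
      have hchieq : st16chi g A (st16B g A (st16chi g A S.1.1)) = st16chi g A S.1.1 :=
        st16_chi_B hoff
      exact st16_chi_inj st16_B_subset S.1.2.1 (st16_ATset_B hoff) S.2.2 hchieq
  have h1 : numOrbits g P = Nat.card {y : (Fin g → Bool) × Bool // st16Py g A y} := by
    unfold numOrbits
    exact (Nat.card_eq_of_bijective f hbij).symm
  rw [h1, Nat.card_eq_fintype_card, Fintype.card_subtype]

/-- For every `A ⊆ {1,…,g}`, the number of `G`-orbits of odd classes `[T] ∈ Θ` with
`A(T) = A` equals `2^{g−1−|A|}` if `|A| < g`, and equals `0` if `A = {1,…,g}`. -/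
theorem stmt16 (g : ℕ) (hg : 1 ≤ g) (A : Finset (Fin g)) :
    (A.card < g →
      numOrbits g (fun T => IsOddRep g T ∧ ATset g T.1 = A) = 2 ^ (g - 1 - A.card)) ∧
    (A = Finset.univ →
      numOrbits g (fun T => IsOddRep g T ∧ ATset g T.1 = A) = 0) := by
  constructor
  · intro hA
    rw [st16_numOrbits_eq, st16_count_main hA]
  · intro hA
    subst hA
    rw [st16_numOrbits_eq, st16_count_univ hg]
end
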